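/- arXiv:1311.7275 — 10 statements merged into one kernel-verified Lean document; each statement's English description precedes it below -/
import Mathlib

section
/- The star product is associative: for A ∈ M_n ⊗ M_m, B ∈ M_m ⊗ M_l, C ∈ M_l ⊗ M_p, one has (A*B)*C = A*(B*C). -/
open Matrix

lemma sum4_swap {α β γ : Type*} [Fintype α] [Fintype β] [AddCommMonoid γ]
    (f : α → α → β → β → γ) :
    ∑ a, ∑ b, ∑ c, ∑ d, f a b c d = ∑ c, ∑ d, ∑ a, ∑ b, f a b c d := by
  calc ∑ a, ∑ b, ∑ c, ∑ d, f a b c d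
      = ∑ a, ∑ c, ∑ b, ∑ d, f a b c d :=
        Finset.sum_congr rfl fun a _ => Finset.sum_comm
    _ = ∑ c, ∑ a, ∑ b, ∑ d, f a b c d := Finset.sum_comm
    _ = ∑ c, ∑ a, ∑ d, ∑ b, f a b c d :=
        Finset.sum_congr rfl fun c _ => Finset.sum_congr rfl fun a _ => Finset.sum_comm
    _ = ∑ c, ∑ d, ∑ a, ∑ b, f a b c d :=
        Finset.sum_congr rfl fun c _ => Finset.sum_comm

/-- The star product on matrices: for `A ∈ M_n ⊗ M_m` and `B ∈ M_m ⊗ M_l`. -/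
noncomputable def starMat {n m l : ℕ} (A : Matrix (Fin n × Fin m) (Fin n × Fin m) ℂ)
    (B : Matrix (Fin m × Fin l) (Fin m × Fin l) ℂ) :
    Matrix (Fin n × Fin l) (Fin n × Fin l) ℂ :=
  Matrix.of fun p q => ∑ a : Fin m, ∑ b : Fin m, A (p.1, a) (q.1, b) * B (a, p.2) (b, q.2)

/-- The star product is associative. -/
theorem stmt3 {n m l p : ℕ} (A : Matrix (Fin n × Fin m) (Fin n × Fin m) ℂ)
    (B : Matrix (Fin m × Fin l) (Fin m × Fin l) ℂ)
    (C : Matrix (Fin l × Fin p) (Fin l × Fin p) ℂ) :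
    starMat (starMat A B) C = starMat A (starMat B C) := by
  ext ⟨x1, x2⟩ ⟨y1, y2⟩
  simp only [starMat, Matrix.of_apply, Finset.sum_mul, Finset.mul_sum]
  rw [sum4_swap (f := fun (a b : Fin m) (c d : Fin l) =>
    A (x1, a) (y1, b) * (B (a, c) (b, d) * C (c, x2) (d, y2)))]
  simp [mul_assoc]
end

section
/- For vectors v ∈ C^n ⊗ C^m and w ∈ C^m ⊗ C^l, the star product of the positive semidefinite rank-one matrices v·(conj v)^t and w·(conj w)^t equals (v*w)·(conj(v*w))^t; consequently it is positive semidefinite. -/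
open Matrix ComplexOrder

/-- The star product on vectors. -/
noncomputable def starVec {n m l : ℕ} (v : Fin n × Fin m → ℂ) (w : Fin m × Fin l → ℂ) :
    Fin n × Fin l → ℂ :=
  fun p => ∑ a : Fin m, v (p.1, a) * w (a, p.2)

lemma vecMulVec_star_psd {ι : Type*} [Fintype ι] [DecidableEq ι] (x : ι → ℂ) :
    (Matrix.vecMulVec x (star x)).PosSemidef := by
  have : Matrix.vecMulVec x (star x) = (Matrix.replicateCol (Fin 1) x) * (Matrix.replicateCol (Fin 1) x)ᴴ := by
    ext i j
    simp [Matrix.vecMulVec_apply, Matrix.mul_apply, Matrix.replicateCol_apply, Matrix.conjTranspose_apply]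
  rw [this]
  exact Matrix.posSemidef_self_mul_conjTranspose _

theorem stmt4 {n m l : ℕ} (v : Fin n × Fin m → ℂ) (w : Fin m × Fin l → ℂ) :
    starMat (Matrix.vecMulVec v (star v)) (Matrix.vecMulVec w (star w)) =
      Matrix.vecMulVec (starVec v w) (star (starVec v w)) ∧
    (starMat (Matrix.vecMulVec v (star v)) (Matrix.vecMulVec w (star w))).PosSemidef := by
  have heq : starMat (Matrix.vecMulVec v (star v)) (Matrix.vecMulVec w (star w)) =
      Matrix.vecMulVec (starVec v w) (star (starVec v w)) := by
    ext p q
    simp only [starMat, starVec, Matrix.of_apply, Matrix.vecMulVec_apply, Pi.star_apply,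
      star_sum, star_mul', Finset.sum_mul, Finset.mul_sum]
    rw [Finset.sum_comm]
    apply Finset.sum_congr rfl; intro a _
    apply Finset.sum_congr rfl; intro b _
    ring
  exact ⟨heq, heq ▸ vecMulVec_star_psd _⟩
end

section
/- If A ∈ M_n ⊗ M_m and B ∈ M_m ⊗ M_l are positive semidefinite Hermitian matrices, then their star product A*B ∈ M_n ⊗ M_l is a positive semidefinite Hermitian matrix. -/
/-!
The star product is a compression of the Kronecker product: `A * B = Vᴴ (A ⊗ B) V`, where `V`
contracts the two middle indices against each other. Kronecker products and congruences
`M ↦ Vᴴ M V` both preserve positive semidefiniteness.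
-/

open Matrix ComplexOrder

open scoped Kronecker

/-- The matrix of `1_ι ⊗ (∑ a, e_a ⊗ e_a) ⊗ 1_μ`, i.e. `(i, j) ↦ ∑ a, ((i, a), (a, j))`. -/
def middleDiagonal (R ι κ μ : Type*) [Zero R] [One R] [DecidableEq ι] [DecidableEq κ]
    [DecidableEq μ] : Matrix ((ι × κ) × (κ × μ)) (ι × μ) R :=
  of fun x p => if x.1.1 = p.1 ∧ x.1.2 = x.2.1 ∧ x.2.2 = p.2 then 1 else 0

theorem conjTranspose_middleDiagonal_mul_kronecker_mul_apply {R ι κ μ : Type*} [Semiring R]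
    [StarRing R] [Fintype ι] [Fintype κ] [Fintype μ] [DecidableEq ι] [DecidableEq κ]
    [DecidableEq μ] (A : Matrix (ι × κ) (ι × κ) R) (B : Matrix (κ × μ) (κ × μ) R) (p q : ι × μ) :
    ((middleDiagonal R ι κ μ)ᴴ * (A ⊗ₖ B) * middleDiagonal R ι κ μ) p q =
      ∑ a, ∑ b, A (p.1, a) (q.1, b) * B (a, p.2) (b, q.2) := by
  simp only [middleDiagonal, ite_and, mul_apply, conjTranspose_apply, of_apply, apply_ite,
    star_one, star_zero, kroneckerMap_apply, ite_mul, one_mul, zero_mul, Fintype.sum_prod_type,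
    Finset.sum_ite_irrel, Finset.sum_ite_eq', Finset.mem_univ, ↓reduceIte, Finset.sum_const_zero,
    Finset.sum_ite_eq, mul_one, mul_zero]
  exact Finset.sum_comm

theorem starMat_eq_conjTranspose_mul_kronecker_mul {n m l : ℕ}
    (A : Matrix (Fin n × Fin m) (Fin n × Fin m) ℂ) (B : Matrix (Fin m × Fin l) (Fin m × Fin l) ℂ) :
    starMat A B = (middleDiagonal ℂ (Fin n) (Fin m) (Fin l))ᴴ * (A ⊗ₖ B) *
      middleDiagonal ℂ (Fin n) (Fin m) (Fin l) := by
  ext p q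
  exact (conjTranspose_middleDiagonal_mul_kronecker_mul_apply A B p q).symm

theorem stmt5 {n m l : ℕ} (A : Matrix (Fin n × Fin m) (Fin n × Fin m) ℂ)
    (B : Matrix (Fin m × Fin l) (Fin m × Fin l) ℂ)
    (hA : A.PosSemidef) (hB : B.PosSemidef) : (starMat A B).PosSemidef := by
  rw [starMat_eq_conjTranspose_mul_kronecker_mul]
  exact (hA.kronecker hB).conjTranspose_mul_mul_same _
end

section
/- If A ∈ M_n ⊗ M_m is a matrix such that A*B is a positive semidefinite Hermitian matrix for every positive semidefinite Hermitian matrix B ∈ M_m ⊗ M_l (for all l ≥ 1), then A itself is a positive semidefinite Hermitian matrix. -/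
open Matrix ComplexOrder

/-- The vector `u = ∑ i, e_i ⊗ e_i`. -/
def maxEntangled (m : ℕ) : Fin m × Fin m → ℂ := fun p => if p.1 = p.2 then 1 else 0

theorem maxEntangled_projector_posSemidef (m : ℕ) :
    (vecMulVec (maxEntangled m) (star (maxEntangled m))).PosSemidef :=
  posSemidef_vecMulVec_self_star _

theorem starMat_maxEntangled_projector {n m : ℕ}
    (A : Matrix (Fin n × Fin m) (Fin n × Fin m) ℂ) :
    starMat A (vecMulVec (maxEntangled m) (star (maxEntangled m))) = A := by
  ext ⟨i, j⟩ ⟨k, l⟩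
  simp [starMat, vecMulVec_apply, maxEntangled, apply_ite (starRingEnd ℂ)]

theorem stmt6 {n m : ℕ} (A : Matrix (Fin n × Fin m) (Fin n × Fin m) ℂ)
    (h : ∀ l : ℕ, 1 ≤ l → ∀ B : Matrix (Fin m × Fin l) (Fin m × Fin l) ℂ,
      B.PosSemidef → (starMat A B).PosSemidef) :
    A.PosSemidef := by
  rcases Nat.eq_zero_or_pos m with rfl | hm
  · exact Subsingleton.elim A 0 ▸ PosSemidef.zero
  · simpa [starMat_maxEntangled_projector] using
      h m hm _ (maxEntangled_projector_posSemidef m)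
end

section
/- Choi's theorem: a linear map T : M_m → M_n is completely positive if and only if (T ⊗ Id)(u·u^t) is a positive semidefinite Hermitian matrix, where u = Σ_{i=1}^m e_i ⊗ e_i. -/
/-!
`(T ⊗ Id)(u uᵗ)` is the Choi matrix `C` of `T` and `u uᵗ` is positive semidefinite, so complete
positivity gives `C ≥ 0`. Conversely, expanding `B` in matrix units shows
`(T ⊗ Id)(B) = Vᴴ (C ⊗ B) V`, where the 0/1 matrix `V` identifies the column index of `C` with
the row index of `B`. A Kronecker product of positive semidefinite matrices is positive
semidefinite, and so is every congruence `Vᴴ M V` of one.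
-/

open Matrix ComplexOrder

/-- The map `T ⊗ Id` applied to a matrix in `M_m ⊗ M_l`, defined entrywise. -/
noncomputable def tensorId {m n l : ℕ}
    (T : Matrix (Fin m) (Fin m) ℂ →ₗ[ℂ] Matrix (Fin n) (Fin n) ℂ)
    (B : Matrix (Fin m × Fin l) (Fin m × Fin l) ℂ) :
    Matrix (Fin n × Fin l) (Fin n × Fin l) ℂ :=
  Matrix.of fun p q => T (Matrix.of fun a b => B (a, p.2) (b, q.2)) p.1 q.1

/-- The vector `u = ∑ e_i ⊗ e_i ∈ ℂ^m ⊗ ℂ^m`. -/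
noncomputable def uVec (m : ℕ) : Fin m × Fin m → ℂ :=
  fun p => if p.1 = p.2 then 1 else 0

open scoped Kronecker

def choiMatrix {R ι κ : Type*} [CommSemiring R] [DecidableEq κ]
    (T : Matrix κ κ R →ₗ[R] Matrix ι ι R) : Matrix (ι × κ) (ι × κ) R :=
  of fun p q => T (single p.2 q.2 1) p.1 q.1

def contractMiddle (R ι κ ν : Type*) [Zero R] [One R] [DecidableEq ι] [DecidableEq κ]
    [DecidableEq ν] : Matrix ((ι × κ) × (κ × ν)) (ι × ν) R :=
  of fun x y => if x.1.1 = y.1 ∧ x.2.2 = y.2 ∧ x.1.2 = x.2.1 then 1 else 0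

theorem conjTranspose_contractMiddle_mul_kronecker_mul_apply {R ι κ ν : Type*} [CommSemiring R]
    [StarRing R] [Fintype ι] [Fintype κ] [Fintype ν] [DecidableEq ι] [DecidableEq κ]
    [DecidableEq ν] (X : Matrix (ι × κ) (ι × κ) R) (Y : Matrix (κ × ν) (κ × ν) R)
    (i j : ι) (p q : ν) :
    ((contractMiddle R ι κ ν)ᴴ * (X ⊗ₖ Y) * contractMiddle R ι κ ν) (i, p) (j, q) =
      ∑ a, ∑ b, X (i, a) (j, b) * Y (a, p) (b, q) := by
  rw [Finset.sum_comm]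
  simp [contractMiddle, mul_apply, Fintype.sum_prod_type, ite_and, apply_ite star, ite_mul]

theorem tensorId_apply {m n l : ℕ}
    (T : Matrix (Fin m) (Fin m) ℂ →ₗ[ℂ] Matrix (Fin n) (Fin n) ℂ)
    (B : Matrix (Fin m × Fin l) (Fin m × Fin l) ℂ) (i j : Fin n) (p q : Fin l) :
    tensorId T B (i, p) (j, q) = ∑ a, ∑ b, choiMatrix T (i, a) (j, b) * B (a, p) (b, q) := by
  have hB : (of fun a b => B (a, p) (b, q)) = ∑ a, ∑ b, B (a, p) (b, q) • single a b 1 := by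
    simpa [smul_single] using matrix_eq_sum_single (of fun a b => B (a, p) (b, q))
  simp only [tensorId, of_apply, hB, map_sum, map_smul, Matrix.sum_apply, Matrix.smul_apply,
    smul_eq_mul, choiMatrix, mul_comm]

theorem tensorId_eq_conjTranspose_mul_kronecker_mul {m n l : ℕ}
    (T : Matrix (Fin m) (Fin m) ℂ →ₗ[ℂ] Matrix (Fin n) (Fin n) ℂ)
    (B : Matrix (Fin m × Fin l) (Fin m × Fin l) ℂ) :
    tensorId T B = (contractMiddle ℂ (Fin n) (Fin m) (Fin l))ᴴ * (choiMatrix T ⊗ₖ B) *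
      contractMiddle ℂ (Fin n) (Fin m) (Fin l) := by
  ext ⟨i, p⟩ ⟨j, q⟩
  rw [tensorId_apply, conjTranspose_contractMiddle_mul_kronecker_mul_apply]

theorem tensorId_vecMulVec_uVec {m n : ℕ}
    (T : Matrix (Fin m) (Fin m) ℂ →ₗ[ℂ] Matrix (Fin n) (Fin n) ℂ) :
    tensorId T (vecMulVec (uVec m) (uVec m)) = choiMatrix T := by
  ext ⟨i, a⟩ ⟨j, b⟩
  simp [tensorId_apply, vecMulVec_apply, uVec]

theorem star_uVec (m : ℕ) : star (uVec m) = uVec m := by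
  ext p; simp [uVec, apply_ite]

theorem posSemidef_vecMulVec_uVec (m : ℕ) : (vecMulVec (uVec m) (uVec m)).PosSemidef := by
  simpa [star_uVec] using posSemidef_vecMulVec_self_star (uVec m)

/-- Choi's theorem: `T` is completely positive iff `(T ⊗ Id)(u uᵗ)` is
positive semidefinite. -/
theorem stmt7 {m n : ℕ} (T : Matrix (Fin m) (Fin m) ℂ →ₗ[ℂ] Matrix (Fin n) (Fin n) ℂ) :
    (∀ l : ℕ, ∀ B : Matrix (Fin m × Fin l) (Fin m × Fin l) ℂ,
        B.PosSemidef → (tensorId T B).PosSemidef) ↔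
      (tensorId T (Matrix.vecMulVec (uVec m) (uVec m))).PosSemidef := by
  rw [tensorId_vecMulVec_uVec]
  refine ⟨fun hT => ?_, fun hC l B hB => ?_⟩
  · rw [← tensorId_vecMulVec_uVec]
    exact hT m _ (posSemidef_vecMulVec_uVec m)
  · rw [tensorId_eq_conjTranspose_mul_kronecker_mul]
    exact (hC.kronecker hB).conjTranspose_mul_mul_same _
end

section
/- Every Hermitian matrix A ∈ M_k ⊗ M_m admits a Hermitian Schmidt decomposition: A = Σ_{i=1}^n λ_i γ_i ⊗ δ_i where λ_i > 0 are real, {γ_1,...,γ_n} ⊂ M_k and {δ_1,...,δ_n} ⊂ M_m are orthonormal sets of Hermitian matrices with respect to the trace inner product ⟨C,D⟩ = tr(C D*). -/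
/-!
The Hermitian matrices in `M_n` form a real vector space whose trace inner product is real, and
they contain a trace-orthonormal basis of `M_n` over `ℂ` (built from matrix units, one matrix for
each `(a, b)`). Kronecker products of two such bases form a Hermitian trace-orthonormal basis of
`M_k ⊗ M_m`, in which a Hermitian `A` has real coefficients `r a b`. A real singular value
decomposition `r = ∑ σᵢ uᵢ vᵢᵀ` of the coefficient matrix then gives
`A = ∑ σᵢ γᵢ ⊗ δᵢ`, where `γᵢ` (resp. `δᵢ`) is the Hermitian matrix with real coordinates `uᵢ`
(resp. `vᵢ`), and orthonormality of the `uᵢ` transfers to the `γᵢ`.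
-/

open Matrix Kronecker
open Module Complex
open scoped InnerProductSpace

namespace LinearMap

variable {𝕜 E F : Type*} [RCLike 𝕜]
  [NormedAddCommGroup E] [InnerProductSpace 𝕜 E] [FiniteDimensional 𝕜 E]
  [NormedAddCommGroup F] [InnerProductSpace 𝕜 F] [FiniteDimensional 𝕜 F]

theorem inner_apply_eigenvectorBasis_adjoint_comp_self (T : E →ₗ[𝕜] F)
    (i j : Fin (finrank 𝕜 E)) :
    ⟪T (T.isSymmetric_adjoint_comp_self.eigenvectorBasis rfl i),
      T (T.isSymmetric_adjoint_comp_self.eigenvectorBasis rfl j)⟫_𝕜 =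
      if i = j then ((T.singularValues i ^ 2 : ℝ) : 𝕜) else 0 := by
  rw [← adjoint_inner_left, ← comp_apply, T.isSymmetric_adjoint_comp_self.apply_eigenvectorBasis,
    inner_smul_left, orthonormal_iff_ite.mp (OrthonormalBasis.orthonormal _),
    sq_singularValues_fin _ rfl]
  simp

/-- The `v i` are the eigenvectors of `T† T` with nonzero eigenvalue and `u i = T (v i) / σᵢ`;
the remaining eigenvectors lie in the kernel of `T`. -/
theorem exists_orthonormal_sum_singularValues (T : E →ₗ[𝕜] F) :
    ∃ (u : Fin (finrank 𝕜 T.range) → F) (v : Fin (finrank 𝕜 T.range) → E),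
      Orthonormal 𝕜 u ∧ Orthonormal 𝕜 v ∧
      ∀ x, T x = ∑ i : Fin (finrank 𝕜 T.range), (T.singularValues i : 𝕜) • ⟪v i, x⟫_𝕜 • u i := by
  set b := T.isSymmetric_adjoint_comp_self.eigenvectorBasis rfl
  set c : Fin (finrank 𝕜 T.range) → Fin (finrank 𝕜 E) := Fin.castLE T.finrank_range_le
  have hc : c.Injective := Fin.castLE_injective _
  have hσ : ∀ i : Fin (finrank 𝕜 T.range), (T.singularValues i : 𝕜) ≠ 0 := fun i =>
    RCLike.ofReal_ne_zero.mpr (T.singularValues_pos_iff_lt_finrank_range.mpr i.isLt).ne'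
  have hker : ∀ j ∉ Set.range c, T (b j) = 0 := by
    intro j hj
    have hσj : T.singularValues j = 0 := by
      rw [singularValues_eq_zero_iff_le_finrank_range]
      by_contra! h
      exact hj ⟨⟨j, h⟩, rfl⟩
    rw [← inner_self_eq_zero (𝕜 := 𝕜), inner_apply_eigenvectorBasis_adjoint_comp_self,
      if_pos rfl, hσj]
    simp
  refine ⟨fun i => (T.singularValues i : 𝕜)⁻¹ • T (b (c i)), fun i => b (c i), ?_,
    b.orthonormal.comp c hc, fun x => ?_⟩
  · rw [orthonormal_iff_ite]
    intro i j
    rw [inner_smul_left, inner_smul_right, inner_apply_eigenvectorBasis_adjoint_comp_self]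
    simp only [hc.eq_iff]
    split_ifs with h
    · subst h
      have := hσ i
      simp only [map_inv₀, RCLike.conj_ofReal, RCLike.ofReal_pow]
      field_simp
      rfl
    · simp
  · conv_lhs => rw [← b.sum_repr' x, map_sum]
    refine (Fintype.sum_of_injective c hc _ _ (fun j hj => ?_) fun i => ?_).symm
    · rw [map_smul, hker j hj, smul_zero]
    · dsimp only
      rw [map_smul, smul_comm, smul_smul, smul_smul, mul_assoc, mul_inv_cancel₀ (hσ i), mul_one]

end LinearMap

namespace Matrix

theorem exists_orthonormal_sum_mul_star {𝕜 ι κ : Type*} [RCLike 𝕜] [Fintype ι] [Fintype κ]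
    [DecidableEq κ] (r : Matrix ι κ 𝕜) :
    ∃ (n : ℕ) (σ : Fin n → ℝ) (u : Fin n → EuclideanSpace 𝕜 ι) (v : Fin n → EuclideanSpace 𝕜 κ),
      (∀ i, 0 < σ i) ∧ Orthonormal 𝕜 u ∧ Orthonormal 𝕜 v ∧
      ∀ a b, r a b = ∑ i, (σ i : 𝕜) * u i a * star (v i b) := by
  obtain ⟨u, v, hu, hv, hT⟩ := (toEuclideanLin r).exists_orthonormal_sum_singularValues
  refine ⟨_, fun i => (toEuclideanLin r).singularValues i, u, v,
    fun i => (toEuclideanLin r).singularValues_pos_iff_lt_finrank_range.mpr i.isLt, hu, hv,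
    fun a b => ?_⟩
  have hcol := congr($(hT (EuclideanSpace.single b 1)) a)
  simp only [toLpLin_apply, PiLp.ofLp_single, mulVec_single_one, col_apply] at hcol
  rw [hcol, WithLp.ofLp_sum, Finset.sum_apply]
  refine Finset.sum_congr rfl fun i _ => ?_
  simp only [EuclideanSpace.inner_single_right, one_mul, algebraMap_smul, PiLp.smul_apply,
    smul_eq_mul, RCLike.real_smul_eq_coe_mul, RCLike.star_def]
  ring

section TraceOrthonormal

variable {𝕜 ι κ n p : Type*} [Field 𝕜] [StarRing 𝕜] [DecidableEq ι] [DecidableEq κ]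
  [Fintype n] [Fintype p]

def TraceOrthonormal (e : ι → Matrix n n 𝕜) : Prop :=
  ∀ i j, trace (e i * (e j)ᴴ) = if i = j then 1 else 0

variable {e : ι → Matrix n n 𝕜}

theorem TraceOrthonormal.trace_sum_smul_mul_conjTranspose [Fintype ι] (he : TraceOrthonormal e)
    (c : ι → 𝕜) (j : ι) : trace ((∑ i, c i • e i) * (e j)ᴴ) = c j := by
  simp [Finset.sum_mul, trace_sum, he _ j]

theorem TraceOrthonormal.trace_sum_smul_mul_conjTranspose_sum_smul [Fintype ι]
    (he : TraceOrthonormal e) (c d : ι → 𝕜) :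
    trace ((∑ i, c i • e i) * (∑ i, d i • e i)ᴴ) = ∑ i, c i * star (d i) := by
  simp [conjTranspose_sum, Finset.mul_sum, trace_sum, he.trace_sum_smul_mul_conjTranspose,
    mul_comm]

theorem TraceOrthonormal.linearIndependent [Fintype ι] (he : TraceOrthonormal e) :
    LinearIndependent 𝕜 e :=
  Fintype.linearIndependent_iff.mpr fun c hc j => by
    simpa [hc] using (he.trace_sum_smul_mul_conjTranspose c j).symm

theorem TraceOrthonormal.sum_trace_mul_conjTranspose_smul [Fintype ι] (he : TraceOrthonormal e)
    (hcard : Fintype.card ι = Fintype.card n ^ 2) (M : Matrix n n 𝕜) :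
    ∑ i, trace (M * (e i)ᴴ) • e i = M := by
  have hspan : Submodule.span 𝕜 (Set.range e) = ⊤ :=
    he.linearIndependent.span_eq_top_of_card_eq_finrank' (by simp [hcard, sq, finrank_matrix])
  have hM : M ∈ Submodule.span 𝕜 (Set.range e) := hspan ▸ Submodule.mem_top
  obtain ⟨c, rfl⟩ := (Submodule.mem_span_range_iff_exists_fun 𝕜).mp hM
  simp_rw [he.trace_sum_smul_mul_conjTranspose]

theorem TraceOrthonormal.kronecker {f : κ → Matrix p p 𝕜} (he : TraceOrthonormal e)
    (hf : TraceOrthonormal f) : TraceOrthonormal fun q : ι × κ => e q.1 ⊗ₖ f q.2 := by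
  rintro ⟨i, j⟩ ⟨i', j'⟩
  rw [conjTranspose_kronecker, ← mul_kronecker_mul, trace_kronecker, he, hf]
  simp only [Prod.mk.injEq, ite_zero_mul_ite_zero, one_mul]

end TraceOrthonormal

theorem IsHermitian.star_trace_mul {R n : Type*} [CommRing R] [StarRing R] [Fintype n]
    {A B : Matrix n n R} (hA : A.IsHermitian) (hB : B.IsHermitian) :
    star (trace (A * B)) = trace (A * B) := by
  rw [← trace_conjTranspose, conjTranspose_mul, hA.eq, hB.eq, trace_mul_comm]

theorem IsHermitian.kronecker {R n p : Type*} [CommRing R] [StarRing R]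
    {A : Matrix n n R} {B : Matrix p p R} (hA : A.IsHermitian) (hB : B.IsHermitian) :
    (A ⊗ₖ B).IsHermitian := by
  rw [IsHermitian, conjTranspose_kronecker, hA.eq, hB.eq]

theorem sum_smul_kronecker_sum_smul {R ι κ n p : Type*} [CommRing R] [Fintype ι] [Fintype κ]
    (x : ι → R) (y : κ → R) (e : ι → Matrix n n R) (f : κ → Matrix p p R) :
    (∑ a, x a • e a) ⊗ₖ (∑ b, y b • f b) = ∑ a, ∑ b, (x a * y b) • (e a ⊗ₖ f b) := by
  ext
  simp [kroneckerMap_apply, sum_apply, Finset.sum_mul_sum, mul_mul_mul_comm]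

section HermitianBasis

variable {n : Type*} [LinearOrder n]

/-- `hermBasis (a, b) = c • E_ab + conj c • E_ba` with `c = hermBasisCoeff a b`: this is `E_aa`
on the diagonal, `(E_ab + E_ba) / √2` for `a < b` and `i (E_ab - E_ba) / √2` for `a > b`. -/
noncomputable def hermBasisCoeff (a b : n) : ℂ :=
  if a = b then 2⁻¹ else if a < b then (√2 : ℂ)⁻¹ else I * (√2 : ℂ)⁻¹

theorem hermBasisCoeff_self (a : n) : hermBasisCoeff a a = 2⁻¹ := if_pos rfl

theorem hermBasisCoeff_mul_star {a b : n} (h : a ≠ b) :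
    hermBasisCoeff a b * star (hermBasisCoeff a b) = 2⁻¹ := by
  have hsq : (√2 : ℂ)⁻¹ ^ 2 = 2⁻¹ := by
    rw [inv_pow, ← ofReal_pow, Real.sq_sqrt zero_le_two, ofReal_ofNat]
  rw [hermBasisCoeff, if_neg h]
  split_ifs
  · rw [star_def, map_inv₀, conj_ofReal, ← sq, hsq]
  · rw [star_mul', star_def, conj_I, map_inv₀, conj_ofReal]
    linear_combination (-(√2 : ℂ)⁻¹ ^ 2) * I_sq + hsq

theorem hermBasisCoeff_mul_swap_add_star {a b : n} (h : a ≠ b) :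
    hermBasisCoeff a b * hermBasisCoeff b a +
      star (hermBasisCoeff a b * hermBasisCoeff b a) = 0 := by
  rcases h.lt_or_gt with h | h <;> simp [hermBasisCoeff, h, h.ne, h.ne', h.not_gt]

noncomputable def hermBasis (q : n × n) : Matrix n n ℂ :=
  single q.1 q.2 (hermBasisCoeff q.1 q.2) + (single q.1 q.2 (hermBasisCoeff q.1 q.2))ᴴ

theorem isHermitian_hermBasis (q : n × n) : (hermBasis q).IsHermitian :=
  isHermitian_add_transpose_self _

theorem hermBasis_apply (q : n × n) (i j : n) :
    hermBasis q i j = (if q = (i, j) then hermBasisCoeff q.1 q.2 else 0) +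
      if q = (j, i) then star (hermBasisCoeff q.1 q.2) else 0 := by
  simp [hermBasis, single_apply, Prod.ext_iff, and_comm]

variable [Fintype n]

theorem trace_hermBasis_mul (q : n × n) (M : Matrix n n ℂ) :
    trace (hermBasis q * M) =
      hermBasisCoeff q.1 q.2 * M q.2 q.1 + star (hermBasisCoeff q.1 q.2) * M q.1 q.2 := by
  simp [hermBasis, add_mul, trace_single_mul]

theorem traceOrthonormal_hermBasis : TraceOrthonormal (hermBasis (n := n)) := by
  intro p q
  rw [(isHermitian_hermBasis q).eq, trace_hermBasis_mul, hermBasis_apply, hermBasis_apply]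
  obtain ⟨a, b⟩ := p
  dsimp only
  by_cases hpq : q = (a, b)
  · subst hpq
    by_cases hab : a = b
    · subst hab
      norm_num [hermBasisCoeff_self]
    · have hc := hermBasisCoeff_mul_star hab
      rw [star_def] at hc
      simp only [Prod.ext_iff, hab, false_and, ↓reduceIte, RCLike.star_def, zero_add, add_zero]
      linear_combination 2 * hc
  · rw [if_neg hpq, if_neg (Ne.symm hpq)]
    by_cases hq : q = (b, a)
    · subst hq
      have hab : a ≠ b := fun h => hpq (by rw [h])
      simpa [hab, mul_comm] using hermBasisCoeff_mul_swap_add_star hab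
    · simp [hq, hpq]

end HermitianBasis

theorem exists_isHermitian_traceOrthonormal (n : Type*) [Fintype n] [DecidableEq n] :
    ∃ e : n × n → Matrix n n ℂ, (∀ q, (e q).IsHermitian) ∧ TraceOrthonormal e := by
  let : LinearOrder n := LinearOrder.lift' (Fintype.equivFin n) (Fintype.equivFin n).injective
  exact ⟨hermBasis, isHermitian_hermBasis, by convert traceOrthonormal_hermBasis (n := n)⟩

section Hermitian

variable {ι κ n p : Type*} [Fintype ι] [Fintype κ] {e : ι → Matrix n n ℂ} {f : κ → Matrix p p ℂ}

theorem isHermitian_sum_ofReal_smul (heH : ∀ i, (e i).IsHermitian) (x : ι → ℝ) :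
    (∑ i, (x i : ℂ) • e i).IsHermitian := by
  simp [IsHermitian, conjTranspose_sum, (heH _).eq]

variable [DecidableEq ι] [DecidableEq κ] [Fintype n] [Fintype p]

theorem TraceOrthonormal.sum_ofReal_smul_of_orthonormal {N : Type*} [DecidableEq N]
    (he : TraceOrthonormal e) {u : N → EuclideanSpace ℝ ι} (hu : Orthonormal ℝ u) :
    TraceOrthonormal fun k => ∑ i, (u k i : ℂ) • e i := by
  intro k l
  rw [he.trace_sum_smul_mul_conjTranspose_sum_smul]
  have hkl := orthonormal_iff_ite.mp hu k l
  simp only [PiLp.inner_apply, RCLike.inner_apply, conj_trivial] at hkl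
  simp only [star_def, conj_ofReal, ← ofReal_mul, ← ofReal_sum, mul_comm (u k _), hkl]
  split_ifs <;> simp

theorem IsHermitian.eq_sum_re_trace_mul_kronecker_smul (he : TraceOrthonormal e)
    (hf : TraceOrthonormal f) (heH : ∀ i, (e i).IsHermitian) (hfH : ∀ j, (f j).IsHermitian)
    (hι : Fintype.card ι = Fintype.card n ^ 2) (hκ : Fintype.card κ = Fintype.card p ^ 2)
    {A : Matrix (n × p) (n × p) ℂ} (hA : A.IsHermitian) :
    A = ∑ i, ∑ j, ((trace (A * (e i ⊗ₖ f j))).re : ℂ) • (e i ⊗ₖ f j) := by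
  have hcard : Fintype.card (ι × κ) = Fintype.card (n × p) ^ 2 := by
    simp [hι, hκ, mul_pow]
  conv_lhs => rw [← (he.kronecker hf).sum_trace_mul_conjTranspose_smul hcard A]
  rw [Fintype.sum_prod_type]
  refine Finset.sum_congr rfl fun i _ => Finset.sum_congr rfl fun j _ => ?_
  have hG := (heH i).kronecker (hfH j)
  rw [hG.eq, conj_eq_iff_re.mp (hA.star_trace_mul hG)]

end Hermitian

theorem IsHermitian.exists_hermitian_schmidt_decomposition {n p : Type*} [Fintype n] [Fintype p]
    {A : Matrix (n × p) (n × p) ℂ} (hA : A.IsHermitian) :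
    ∃ (N : ℕ) (σ : Fin N → ℝ) (γ : Fin N → Matrix n n ℂ) (δ : Fin N → Matrix p p ℂ),
      (∀ i, 0 < σ i) ∧ (∀ i, (γ i).IsHermitian) ∧ (∀ i, (δ i).IsHermitian) ∧
      TraceOrthonormal γ ∧ TraceOrthonormal δ ∧ A = ∑ i, (σ i : ℂ) • (γ i ⊗ₖ δ i) := by
  classical
  obtain ⟨e, heH, he⟩ := exists_isHermitian_traceOrthonormal n
  obtain ⟨f, hfH, hf⟩ := exists_isHermitian_traceOrthonormal p
  obtain ⟨N, σ, u, v, hσ, hu, hv, hr⟩ :=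
    exists_orthonormal_sum_mul_star (of fun a b => (trace (A * (e a ⊗ₖ f b))).re)
  refine ⟨N, σ, fun i => ∑ a, (u i a : ℂ) • e a, fun i => ∑ b, (v i b : ℂ) • f b, hσ,
    fun i => isHermitian_sum_ofReal_smul heH _, fun i => isHermitian_sum_ofReal_smul hfH _,
    he.sum_ofReal_smul_of_orthonormal hu, hf.sum_ofReal_smul_of_orthonormal hv, ?_⟩
  simp only [of_apply, star_trivial] at hr
  calc A = ∑ a, ∑ b, ((trace (A * (e a ⊗ₖ f b))).re : ℂ) • (e a ⊗ₖ f b) :=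
        hA.eq_sum_re_trace_mul_kronecker_smul he hf heH hfH (by simp [sq]) (by simp [sq])
    _ = ∑ i, (σ i : ℂ) • ((∑ a, (u i a : ℂ) • e a) ⊗ₖ ∑ b, (v i b : ℂ) • f b) := by
        simp_rw [hr, sum_smul_kronecker_sum_smul, Finset.smul_sum, smul_smul, ofReal_sum,
          ofReal_mul, Finset.sum_smul, mul_assoc]
        exact (Finset.sum_congr rfl fun a _ => Finset.sum_comm).trans Finset.sum_comm

end Matrix

/-- Every Hermitian matrix in `M_k ⊗ M_m` admits a Hermitian Schmidt decomposition. -/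
theorem stmt10 {k m : ℕ} (A : Matrix (Fin k × Fin m) (Fin k × Fin m) ℂ)
    (hA : A.IsHermitian) :
    ∃ (n : ℕ) (lam : Fin n → ℝ) (γ : Fin n → Matrix (Fin k) (Fin k) ℂ)
      (δ : Fin n → Matrix (Fin m) (Fin m) ℂ),
      (∀ i, 0 < lam i) ∧
      (∀ i, (γ i).IsHermitian) ∧ (∀ i, (δ i).IsHermitian) ∧
      (∀ i j, Matrix.trace (γ i * (γ j)ᴴ) = if i = j then 1 else 0) ∧
      (∀ i j, Matrix.trace (δ i * (δ j)ᴴ) = if i = j then 1 else 0) ∧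
      A = ∑ i, (lam i : ℂ) • (γ i ⊗ₖ δ i) :=
  hA.exists_hermitian_schmidt_decomposition
end

section
/- Let A ∈ M_k ⊗ M_m be positive semidefinite Hermitian with Hermitian Schmidt decomposition Σ_{i=1}^n λ_i γ_i ⊗ δ_i. If for some index j both γ_j and δ_j are positive semidefinite, then the subspace (range(γ_j) ⊗ ker(δ_j)) ⊕ (ker(γ_j) ⊗ range(δ_j)) is contained in ker(A). -/
open Matrix Kronecker ComplexOrder

/-!
Pairing `A` with a product vector `x ⊗ y` gives the form `Σ λᵢ ⟨x, γᵢ x⟩ ⟨y, δᵢ y⟩`, which is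
nonnegative because `A` is. For fixed `y` with `⟨y, δⱼ y⟩ = 0` it is the quadratic form of
`C = Σ λᵢ ⟨y, δᵢ y⟩ γᵢ`, so `C` is positive semidefinite, and by orthogonality
`tr (C γⱼ) = λⱼ ⟨y, δⱼ y⟩ = 0`. For positive semidefinite `C` and `γⱼ` this forces `γⱼ C γⱼ = 0`,
so the form vanishes at `x = γⱼ z`; since `A` is positive semidefinite, `A (x ⊗ y) = 0`.
Exchanging the roles of the two factors handles `ker γⱼ ⊗ range δⱼ`.
-/

namespace Matrix

theorem star_dotProduct_kronecker_mulVec {R K M : Type*} [CommSemiring R] [StarRing R]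
    [Fintype K] [Fintype M] (γ : Matrix K K R) (δ : Matrix M M R) (x : K → R) (y : M → R) :
    star (fun p : K × M => x p.1 * y p.2) ⬝ᵥ (γ ⊗ₖ δ) *ᵥ (fun p => x p.1 * y p.2) =
      (star x ⬝ᵥ γ *ᵥ x) * (star y ⬝ᵥ δ *ᵥ y) := by
  simp only [dotProduct, mulVec, Fintype.sum_prod_type, kroneckerMap_apply, Pi.star_apply,
    star_mul', Finset.sum_mul_sum]
  refine Finset.sum_congr rfl fun a _ => ?_
  refine Finset.sum_congr rfl fun b _ => ?_
  rw [mul_mul_mul_comm, Finset.sum_mul_sum]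
  congr 1
  exact Finset.sum_congr rfl fun c _ => Finset.sum_congr rfl fun d _ => by ring

theorem IsHermitian.isSelfAdjoint_star_dotProduct_mulVec {R n : Type*} [CommSemiring R]
    [StarRing R] [Fintype n] {A : Matrix n n R} (hA : A.IsHermitian) (x : n → R) :
    IsSelfAdjoint (star x ⬝ᵥ A *ᵥ x) := by
  rw [isSelfAdjoint_iff, ← star_dotProduct_star, star_star, star_mulVec, hA.eq,
    ← dotProduct_mulVec]

open scoped MatrixOrder in
theorem PosSemidef.mul_mul_eq_zero_of_trace_mul_eq_zero {𝕜 n : Type*} [RCLike 𝕜] [Fintype n]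
    [DecidableEq n] {C G : Matrix n n 𝕜} (hC : C.PosSemidef) (hG : G.PosSemidef)
    (h : (C * G).trace = 0) : G * C * G = 0 := by
  set S := CFC.sqrt G
  have hSS : S * S = G := CFC.sqrt_mul_sqrt_self G hG.nonneg
  have hSCS : (S * C * S).PosSemidef := by
    have hS : Sᴴ = S := (CFC.sqrt_nonneg G).posSemidef.isHermitian.eq
    simpa only [hS] using hC.conjTranspose_mul_mul_same S
  have hSCS_zero : S * C * S = 0 := by
    rw [← hSCS.trace_eq_zero_iff, Matrix.mul_assoc, trace_mul_comm, Matrix.mul_assoc, hSS, h]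
  rw [← hSS, show S * S * C * (S * S) = S * (S * C * S) * S by simp only [Matrix.mul_assoc],
    hSCS_zero, Matrix.mul_zero, Matrix.zero_mul]

end Matrix

section SchmidtForm

variable {ι 𝕜 K M : Type*} [Fintype ι] [RCLike 𝕜] [Fintype K] [Fintype M]

def schmidtForm (lam : ι → ℝ) (γ : ι → Matrix K K 𝕜) (δ : ι → Matrix M M 𝕜) (x : K → 𝕜)
    (y : M → 𝕜) : 𝕜 :=
  ∑ i, (lam i : 𝕜) * (star x ⬝ᵥ γ i *ᵥ x) * (star y ⬝ᵥ δ i *ᵥ y)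

theorem schmidtForm_comm (lam : ι → ℝ) (γ : ι → Matrix K K 𝕜) (δ : ι → Matrix M M 𝕜)
    (x : K → 𝕜) (y : M → 𝕜) : schmidtForm lam γ δ x y = schmidtForm lam δ γ y x := by
  simp only [schmidtForm, mul_right_comm]

theorem star_dotProduct_sum_kronecker_mulVec (lam : ι → ℝ) (γ : ι → Matrix K K 𝕜)
    (δ : ι → Matrix M M 𝕜) (x : K → 𝕜) (y : M → 𝕜) :
    star (fun p : K × M => x p.1 * y p.2) ⬝ᵥ
        (∑ i, (lam i : 𝕜) • (γ i ⊗ₖ δ i)) *ᵥ (fun p => x p.1 * y p.2) =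
      schmidtForm lam γ δ x y := by
  simp only [Matrix.sum_mulVec, dotProduct_sum, smul_mulVec, dotProduct_smul,
    Matrix.star_dotProduct_kronecker_mulVec, smul_eq_mul, schmidtForm, mul_assoc]

theorem schmidtForm_mulVec_eq_zero [DecidableEq K] {lam : ι → ℝ} {γ : ι → Matrix K K 𝕜}
    {δ : ι → Matrix M M 𝕜} (hγ : ∀ i, (γ i).IsHermitian) (hδ : ∀ i, (δ i).IsHermitian)
    (hnonneg : ∀ x y, 0 ≤ schmidtForm lam γ δ x y) {j : ι} (hγj : (γ j).PosSemidef)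
    (horth : ∀ i ≠ j, (γ i * γ j).trace = 0) {y : M → 𝕜} (hy : star y ⬝ᵥ δ j *ᵥ y = 0)
    (z : K → 𝕜) : schmidtForm lam γ δ (γ j *ᵥ z) y = 0 := by
  set C := ∑ i, ((lam i : 𝕜) * (star y ⬝ᵥ δ i *ᵥ y)) • γ i
  have hC_form : ∀ x, star x ⬝ᵥ C *ᵥ x = schmidtForm lam γ δ x y := fun x => by
    simp only [C, schmidtForm, Matrix.sum_mulVec, dotProduct_sum, smul_mulVec, dotProduct_smul,
      smul_eq_mul]
    exact Finset.sum_congr rfl fun i _ => by ring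
  have hC : C.PosSemidef := by
    refine .of_dotProduct_mulVec_nonneg (isSelfAdjoint_sum _ fun i _ => (hγ i).smul ?_)
      fun x => hC_form x ▸ hnonneg x y
    exact (isSelfAdjoint_iff.mpr (RCLike.conj_ofReal (lam i))).mul
      ((hδ i).isSelfAdjoint_star_dotProduct_mulVec y)
  have hC_trace : (C * γ j).trace = 0 := by
    rw [Finset.sum_mul, trace_sum, Finset.sum_eq_single j
      (fun i _ hij => by rw [smul_mul, trace_smul, horth i hij, smul_zero]) (by simp), hy]
    simp
  rw [← hC_form, star_mulVec, ← dotProduct_mulVec, mulVec_mulVec, mulVec_mulVec,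
    hγj.isHermitian.eq, hC.mul_mul_eq_zero_of_trace_mul_eq_zero hγj hC_trace, zero_mulVec,
    dotProduct_zero]

end SchmidtForm

theorem stmt11_general {k m n : ℕ} (A : Matrix (Fin k × Fin m) (Fin k × Fin m) ℂ)
    (hA : A.PosSemidef)
    (lam : Fin n → ℝ) (γ : Fin n → Matrix (Fin k) (Fin k) ℂ)
    (δ : Fin n → Matrix (Fin m) (Fin m) ℂ)
    (hγ : ∀ i, (γ i).IsHermitian) (hδ : ∀ i, (δ i).IsHermitian)
    (hoγ : ∀ i j, Matrix.trace (γ i * (γ j)ᴴ) = if i = j then 1 else 0)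
    (hoδ : ∀ i j, Matrix.trace (δ i * (δ j)ᴴ) = if i = j then 1 else 0)
    (hdec : A = ∑ i, (lam i : ℂ) • (γ i ⊗ₖ δ i))
    (j : Fin n) (hγj : (γ j).PosSemidef) (hδj : (δ j).PosSemidef) :
    ∀ (x : Fin k → ℂ) (y : Fin m → ℂ) (x' : Fin k → ℂ) (y' : Fin m → ℂ),
      (∃ z, γ j *ᵥ z = x) → δ j *ᵥ y = 0 →
      γ j *ᵥ x' = 0 → (∃ z, δ j *ᵥ z = y') →
      A *ᵥ (fun p => x p.1 * y p.2 + x' p.1 * y' p.2) = 0 := by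
  rintro x y x' y' ⟨z, rfl⟩ hy hx' ⟨z', rfl⟩
  have hA_form (x : Fin k → ℂ) (y : Fin m → ℂ) :
      star (fun p : Fin k × Fin m => x p.1 * y p.2) ⬝ᵥ A *ᵥ (fun p => x p.1 * y p.2) =
        schmidtForm lam γ δ x y := by
    rw [hdec]
    exact star_dotProduct_sum_kronecker_mulVec lam γ δ x y
  have hnonneg (x : Fin k → ℂ) (y : Fin m → ℂ) : 0 ≤ schmidtForm lam γ δ x y :=
    hA_form x y ▸ hA.dotProduct_mulVec_nonneg _
  have hγ_orth (i : Fin n) (hij : i ≠ j) : (γ i * γ j).trace = 0 := by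
    simpa [(hγ j).eq, hij] using hoγ i j
  have hδ_orth (i : Fin n) (hij : i ≠ j) : (δ i * δ j).trace = 0 := by
    simpa [(hδ j).eq, hij] using hoδ i j
  have h₁ : A *ᵥ (fun p => (γ j *ᵥ z) p.1 * y p.2) = 0 := by
    refine (hA.dotProduct_mulVec_zero_iff _).mp ?_
    rw [hA_form]
    exact schmidtForm_mulVec_eq_zero hγ hδ hnonneg hγj hγ_orth (by simp [hy]) z
  have h₂ : A *ᵥ (fun p => x' p.1 * (δ j *ᵥ z') p.2) = 0 := by
    refine (hA.dotProduct_mulVec_zero_iff _).mp ?_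
    rw [hA_form, schmidtForm_comm]
    exact schmidtForm_mulVec_eq_zero hδ hγ (fun y x => schmidtForm_comm lam γ δ x y ▸ hnonneg x y)
      hδj hδ_orth (by simp [hx']) z'
  exact (mulVec_add A _ _).trans (by rw [h₁, h₂, add_zero])

/-- Lemma: if a term of a Hermitian Schmidt decomposition of a PSD matrix `A` has both
factors PSD, then `(range γⱼ ⊗ ker δⱼ) ⊕ (ker γⱼ ⊗ range δⱼ) ⊆ ker A`. -/
theorem stmt11 {k m n : ℕ} (A : Matrix (Fin k × Fin m) (Fin k × Fin m) ℂ)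
    (hA : A.PosSemidef)
    (lam : Fin n → ℝ) (γ : Fin n → Matrix (Fin k) (Fin k) ℂ)
    (δ : Fin n → Matrix (Fin m) (Fin m) ℂ)
    (hpos : ∀ i, 0 < lam i)
    (hγ : ∀ i, (γ i).IsHermitian) (hδ : ∀ i, (δ i).IsHermitian)
    (hoγ : ∀ i j, Matrix.trace (γ i * (γ j)ᴴ) = if i = j then 1 else 0)
    (hoδ : ∀ i j, Matrix.trace (δ i * (δ j)ᴴ) = if i = j then 1 else 0)
    (hdec : A = ∑ i, (lam i : ℂ) • (γ i ⊗ₖ δ i))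
    (j : Fin n) (hγj : (γ j).PosSemidef) (hδj : (δ j).PosSemidef) :
    ∀ (x : Fin k → ℂ) (y : Fin m → ℂ) (x' : Fin k → ℂ) (y' : Fin m → ℂ),
      (∃ z, γ j *ᵥ z = x) → δ j *ᵥ y = 0 →
      γ j *ᵥ x' = 0 → (∃ z, δ j *ᵥ z = y') →
      A *ᵥ (fun p => x p.1 * y p.2 + x' p.1 * y' p.2) = 0 :=
  stmt11_general A hA lam γ δ hγ hδ hoγ hoδ hdec j hγj hδj
end

section
/- Let γ, B ∈ M_k be Hermitian with γ positive semidefinite, B ≠ 0, range(B) ⊆ range(γ), and B not a real scalar multiple of γ. Then there exists λ ∈ R such that γ − λB is positive semidefinite, nonzero, and ker(γ − λB) ∩ range(γ) contains a nonzero vector. -/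
open Matrix ComplexOrder

/-!
Since `γ` and `B` are Hermitian, `range B ⊆ range γ` gives `ker γ ⊆ ker B`, and
`C^k = range γ ⊕ ker γ`; so the forms of `γ` and `B` only see the `range γ`-component of a
vector, and on `V = range γ` the form of `γ` is positive definite. As `B ≠ 0`, the form of `B`
does not vanish on `V`; replacing `B` by `-B` if necessary it is positive somewhere on `V`.
Let `x₀` maximise the Rayleigh quotient `x*Bx / x*γx` over `V \ {0}` (by homogeneity, over
the compact unit sphere of `V`) and put `λ = x₀*γx₀ / x₀*Bx₀ > 0`. Then `γ - λB` is positive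
semidefinite, its form vanishes at `x₀ ∈ V`, hence so does `(γ - λB) x₀`; and `γ - λB ≠ 0`
because `B` is not a real multiple of `γ`.
-/

theorem exists_ne_zero_forall_mul_le_mul_of_homogeneous
    {E : Type*} [NormedAddCommGroup E] [NormedSpace ℝ E] [FiniteDimensional ℝ E]
    {V : Submodule ℝ E} (hV : V ≠ ⊥) {f q : E → ℝ} (hf : Continuous f) (hq : Continuous q)
    (hf_smul : ∀ (c : ℝ) x, f (c • x) = c ^ 2 * f x)
    (hq_smul : ∀ (c : ℝ) x, q (c • x) = c ^ 2 * q x)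
    (hq_pos : ∀ x ∈ V, x ≠ 0 → 0 < q x) :
    ∃ x₀ ∈ V, x₀ ≠ 0 ∧ ∀ x ∈ V, f x * q x₀ ≤ f x₀ * q x := by
  set K := Metric.sphere (0 : E) 1 ∩ V
  have hK : IsCompact K := (isCompact_sphere 0 1).inter_right V.closed_of_finiteDimensional
  have hK_ne : ∀ x ∈ K, x ≠ 0 := by
    rintro x ⟨hx, -⟩ rfl
    simp at hx
  have normalize : ∀ x ∈ V, x ≠ 0 → ‖x‖⁻¹ • x ∈ K := fun x hx hx0 =>
    ⟨by simp [norm_smul, hx0], V.smul_mem _ hx⟩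
  obtain ⟨y, hyV, hy0⟩ := V.ne_bot_iff.mp hV
  obtain ⟨x₀, hx₀K, hmax⟩ := hK.exists_isMaxOn ⟨_, normalize y hyV hy0⟩
    (hf.continuousOn.div hq.continuousOn fun x hx => (hq_pos x hx.2 (hK_ne x hx)).ne')
  refine ⟨x₀, hx₀K.2, hK_ne x₀ hx₀K, fun x hx => ?_⟩
  rcases eq_or_ne x 0 with rfl | hx0
  · have hf0 : f 0 = 0 := by simpa using hf_smul 0 0
    have hq0 : q 0 = 0 := by simpa using hq_smul 0 0
    simp [hf0, hq0]
  · have h := hmax (normalize x hx hx0)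
    rw [Set.mem_ofPred_eq, Pi.div_apply, Pi.div_apply, hf_smul, hq_smul,
      mul_div_mul_left _ _ (by positivity),
      div_le_div_iff₀ (hq_pos x hx hx0) (hq_pos x₀ hx₀K.2 (hK_ne x₀ hx₀K))] at h
    exact h

namespace Matrix

variable {n : Type*} [Fintype n] {A B : Matrix n n ℂ}

lemma IsHermitian.star_mulVec_dotProduct (hA : A.IsHermitian) (x y : n → ℂ) :
    star (A *ᵥ x) ⬝ᵥ y = star x ⬝ᵥ A *ᵥ y := by
  rw [star_mulVec, hA.eq, dotProduct_mulVec]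

lemma IsHermitian.ofReal_re_star_dotProduct_mulVec (hA : A.IsHermitian) (x : n → ℂ) :
    ((star x ⬝ᵥ A *ᵥ x).re : ℂ) = star x ⬝ᵥ A *ᵥ x :=
  Complex.ext rfl (by simpa using (hA.im_star_dotProduct_mulVec_self x).symm)

lemma re_star_smul_dotProduct_mulVec_smul (A : Matrix n n ℂ) (c : ℝ) (x : n → ℂ) :
    (star (c • x) ⬝ᵥ A *ᵥ (c • x)).re = c ^ 2 * (star x ⬝ᵥ A *ᵥ x).re := by
  rw [star_smul, star_trivial, mulVec_smul, smul_dotProduct, dotProduct_smul, smul_smul,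
    Complex.real_smul, Complex.re_ofReal_mul, sq]

lemma continuous_re_star_dotProduct_mulVec (A : Matrix n n ℂ) :
    Continuous fun x : n → ℂ => (star x ⬝ᵥ A *ᵥ x).re := by
  fun_prop

lemma IsHermitian.disjoint_range_ker (hA : A.IsHermitian) :
    Disjoint (LinearMap.range A.mulVecLin) (LinearMap.ker A.mulVecLin) := by
  rw [Submodule.disjoint_def]
  rintro _ ⟨z, rfl⟩ hz
  simp only [LinearMap.mem_ker, mulVecLin_apply] at hz ⊢
  rw [← dotProduct_star_self_eq_zero, hA.star_mulVec_dotProduct, hz,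
    dotProduct_zero]

lemma IsHermitian.isCompl_range_ker (hA : A.IsHermitian) :
    IsCompl (LinearMap.range A.mulVecLin) (LinearMap.ker A.mulVecLin) :=
  (Submodule.isCompl_iff_disjoint _ _ (LinearMap.finrank_range_add_finrank_ker _).ge).mpr
    hA.disjoint_range_ker

lemma IsHermitian.ker_le_ker_of_range_le (hA : A.IsHermitian) (hB : B.IsHermitian)
    (h : LinearMap.range B.mulVecLin ≤ LinearMap.range A.mulVecLin) :
    LinearMap.ker A.mulVecLin ≤ LinearMap.ker B.mulVecLin := by
  intro x hx
  obtain ⟨w, hw⟩ := h ⟨B *ᵥ x, rfl⟩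
  simp only [LinearMap.mem_ker, mulVecLin_apply] at hx hw ⊢
  rw [← dotProduct_star_self_eq_zero, hB.star_mulVec_dotProduct, ← hw,
    ← hA.star_mulVec_dotProduct, hx, star_zero, zero_dotProduct]

lemma IsHermitian.star_add_dotProduct_mulVec_add_of_mulVec_eq_zero (hA : A.IsHermitian)
    (x : n → ℂ) {w : n → ℂ} (hw : A *ᵥ w = 0) :
    star (x + w) ⬝ᵥ A *ᵥ (x + w) = star x ⬝ᵥ A *ᵥ x := by
  rw [mulVec_add, hw, add_zero, star_add, add_dotProduct, ← hA.star_mulVec_dotProduct w, hw,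
    star_zero, zero_dotProduct, add_zero]

lemma PosSemidef.of_ker_le_of_nonneg_of_mem_range {M : Matrix n n ℂ} (hM : M.IsHermitian)
    (hA : A.IsHermitian) (hker : LinearMap.ker A.mulVecLin ≤ LinearMap.ker M.mulVecLin)
    (hnonneg : ∀ x ∈ LinearMap.range A.mulVecLin, 0 ≤ star x ⬝ᵥ M *ᵥ x) :
    M.PosSemidef := by
  refine .of_dotProduct_mulVec_nonneg hM fun x => ?_
  obtain ⟨p, hp, w, hw, rfl⟩ :=
    Submodule.mem_sup.mp (hA.isCompl_range_ker.sup_eq_top ▸ Submodule.mem_top (x := x))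
  rw [hM.star_add_dotProduct_mulVec_add_of_mulVec_eq_zero p (hker hw)]
  exact hnonneg p hp

lemma PosSemidef.re_star_dotProduct_mulVec_pos (hA : A.PosSemidef) {x : n → ℂ}
    (hx : x ∈ LinearMap.range A.mulVecLin) (hx0 : x ≠ 0) : 0 < (star x ⬝ᵥ A *ᵥ x).re := by
  refine (Complex.nonneg_iff.mp (hA.dotProduct_mulVec_nonneg x)).1.lt_of_ne fun h => hx0 ?_
  have hAx : A *ᵥ x = 0 := by
    rw [← hA.dotProduct_mulVec_zero_iff, ← hA.1.ofReal_re_star_dotProduct_mulVec, ← h,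
      Complex.ofReal_zero]
  exact Submodule.disjoint_def.mp hA.1.disjoint_range_ker x hx hAx

lemma IsHermitian.exists_mem_range_star_dotProduct_mulVec_ne_zero (hB : B.IsHermitian)
    (hB0 : B ≠ 0) (h : LinearMap.range B.mulVecLin ≤ LinearMap.range A.mulVecLin) :
    ∃ x ∈ LinearMap.range A.mulVecLin, star x ⬝ᵥ B *ᵥ x ≠ 0 := by
  by_contra! hzero
  obtain ⟨y, hy⟩ : ∃ y, B *ᵥ y ≠ 0 := by
    by_contra! hy
    exact hB0 (ext_iff_mulVec.mpr fun y => by rw [hy, zero_mulVec])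
  have hBBy : B *ᵥ (B *ᵥ y) ≠ 0 := fun h => hy <| dotProduct_star_self_eq_zero.mp <| by
    rw [hB.star_mulVec_dotProduct, h, dotProduct_zero]
  set p := B *ᵥ y
  set u := B *ᵥ p with hu
  have hp : p ∈ LinearMap.range A.mulVecLin := h ⟨y, rfl⟩
  have hu' : u ∈ LinearMap.range A.mulVecLin := h ⟨p, rfl⟩
  -- polarization: both cross terms of the form at `p + u` equal `star u ⬝ᵥ u`
  have hsum := hzero (p + u) (add_mem hp hu')
  rw [mulVec_add, star_add, add_dotProduct, dotProduct_add, dotProduct_add, hzero p hp,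
    hzero u hu', ← hB.star_mulVec_dotProduct p u, ← hu] at hsum
  exact hBBy (dotProduct_star_self_eq_zero.mp (by linear_combination hsum / 2))

lemma star_dotProduct_sub_smul_mulVec (hA : A.IsHermitian) (hB : B.IsHermitian) (t : ℝ)
    (x : n → ℂ) :
    star x ⬝ᵥ (A - (t : ℂ) • B) *ᵥ x =
      (((star x ⬝ᵥ A *ᵥ x).re - t * (star x ⬝ᵥ B *ᵥ x).re : ℝ) : ℂ) := by
  rw [sub_mulVec, dotProduct_sub, smul_mulVec, dotProduct_smul, smul_eq_mul,
    Complex.ofReal_sub, Complex.ofReal_mul, hA.ofReal_re_star_dotProduct_mulVec,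
    hB.ofReal_re_star_dotProduct_mulVec]

lemma PosSemidef.exists_pos_posSemidef_sub_smul (hA : A.PosSemidef) (hB : B.IsHermitian)
    (hker : LinearMap.ker A.mulVecLin ≤ LinearMap.ker B.mulVecLin) {v : n → ℂ}
    (hv : v ∈ LinearMap.range A.mulVecLin) (hBv : 0 < (star v ⬝ᵥ B *ᵥ v).re) :
    ∃ t : ℝ, 0 < t ∧ (A - (t : ℂ) • B).PosSemidef ∧
      ∃ x ∈ LinearMap.range A.mulVecLin, x ≠ 0 ∧ (A - (t : ℂ) • B) *ᵥ x = 0 := by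
  set f := fun x : n → ℂ => (star x ⬝ᵥ B *ᵥ x).re
  set q := fun x : n → ℂ => (star x ⬝ᵥ A *ᵥ x).re
  set V := (LinearMap.range A.mulVecLin).restrictScalars ℝ
  have hq_pos : ∀ x ∈ V, x ≠ 0 → 0 < q x := fun _ hx hx0 =>
    hA.re_star_dotProduct_mulVec_pos hx hx0
  have hv0 : v ≠ 0 := by rintro rfl; simp at hBv
  obtain ⟨x₀, hx₀, hx₀0, hmax⟩ := exists_ne_zero_forall_mul_le_mul_of_homogeneous
    ((Submodule.ne_bot_iff V).mpr ⟨v, hv, hv0⟩) (continuous_re_star_dotProduct_mulVec B)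
    (continuous_re_star_dotProduct_mulVec A) (re_star_smul_dotProduct_mulVec_smul B)
    (re_star_smul_dotProduct_mulVec_smul A) hq_pos
  have hfx₀ : 0 < f x₀ := pos_of_mul_pos_left
    ((mul_pos hBv (hq_pos x₀ hx₀ hx₀0)).trans_le (hmax v hv)) (hq_pos v hv hv0).le
  set t := q x₀ / f x₀
  have hM : (A - (t : ℂ) • B).IsHermitian := hA.1.sub (hB.smul (Complex.conj_ofReal t))
  have hform := star_dotProduct_sub_smul_mulVec hA.1 hB t
  have hpsd : (A - (t : ℂ) • B).PosSemidef := by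
    refine .of_ker_le_of_nonneg_of_mem_range hM hA.1 (fun x hx => ?_) fun x hx => ?_
    · have hBx : B *ᵥ x = 0 := hker hx
      simp only [LinearMap.mem_ker, mulVecLin_apply] at hx hBx ⊢
      rw [sub_mulVec, smul_mulVec, hx, hBx, smul_zero, sub_zero]
    · rw [hform, Complex.zero_le_real, sub_nonneg, ← mul_div_right_comm, div_le_iff₀ hfx₀]
      simpa [mul_comm] using hmax x hx
  refine ⟨t, div_pos (hq_pos x₀ hx₀ hx₀0) hfx₀, hpsd, x₀, hx₀, hx₀0, ?_⟩
  rw [← hpsd.dotProduct_mulVec_zero_iff, hform, div_mul_cancel₀ _ hfx₀.ne', sub_self,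
    Complex.ofReal_zero]

lemma PosSemidef.exists_ne_zero_posSemidef_sub_smul (hA : A.PosSemidef) (hB : B.IsHermitian)
    (hker : LinearMap.ker A.mulVecLin ≤ LinearMap.ker B.mulVecLin) {v : n → ℂ}
    (hv : v ∈ LinearMap.range A.mulVecLin) (hBv : star v ⬝ᵥ B *ᵥ v ≠ 0) :
    ∃ t : ℝ, t ≠ 0 ∧ (A - (t : ℂ) • B).PosSemidef ∧
      ∃ x ∈ LinearMap.range A.mulVecLin, x ≠ 0 ∧ (A - (t : ℂ) • B) *ᵥ x = 0 := by
  have hre : (star v ⬝ᵥ B *ᵥ v).re ≠ 0 := fun h => hBv <| by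
    rw [← hB.ofReal_re_star_dotProduct_mulVec, h, Complex.ofReal_zero]
  rcases hre.lt_or_gt with hneg | hpos
  · have hker' : LinearMap.ker A.mulVecLin ≤ LinearMap.ker (-B).mulVecLin := fun x hx => by
      simpa [neg_mulVec] using hker hx
    obtain ⟨t, ht, h⟩ := hA.exists_pos_posSemidef_sub_smul hB.neg hker' hv
      (by simpa [neg_mulVec] using hneg)
    refine ⟨-t, neg_ne_zero.mpr ht.ne', ?_⟩
    rwa [Complex.ofReal_neg, neg_smul, ← smul_neg]
  · obtain ⟨t, ht, h⟩ := hA.exists_pos_posSemidef_sub_smul hB hker hv hpos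
    exact ⟨t, ht.ne', h⟩

end Matrix

theorem stmt12 {k : ℕ} (γ B : Matrix (Fin k) (Fin k) ℂ)
    (hγ : γ.PosSemidef) (hB : B.IsHermitian) (hB0 : B ≠ 0)
    (hrange : ∀ x : Fin k → ℂ, (∃ z, B *ᵥ z = x) → ∃ z, γ *ᵥ z = x)
    (hnotmul : ∀ c : ℝ, B ≠ (c : ℂ) • γ) :
    ∃ lam : ℝ,
      (γ - (lam : ℂ) • B).PosSemidef ∧
      γ - (lam : ℂ) • B ≠ 0 ∧
      ∃ x : Fin k → ℂ, x ≠ 0 ∧ (γ - (lam : ℂ) • B) *ᵥ x = 0 ∧ ∃ z, γ *ᵥ z = x := by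
  have hBγ : LinearMap.range B.mulVecLin ≤ LinearMap.range γ.mulVecLin := hrange
  obtain ⟨v, hv, hBv⟩ := hB.exists_mem_range_star_dotProduct_mulVec_ne_zero hB0 hBγ
  obtain ⟨t, ht, hpsd, x, hx, hx0, hMx⟩ := hγ.exists_ne_zero_posSemidef_sub_smul hB
    (hγ.1.ker_le_ker_of_range_le hB hBγ) hv hBv
  refine ⟨t, hpsd, fun h => hnotmul t⁻¹ ?_, x, hx0, hMx, hx⟩
  rw [sub_eq_zero.mp h, smul_smul, ← Complex.ofReal_mul, inv_mul_cancel₀ ht, Complex.ofReal_one,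
    one_smul]
end

section
/- Let A ∈ M_k ⊗ M_m be positive semidefinite Hermitian with Hermitian Schmidt decomposition Σ_{i=1}^n λ_i γ_i ⊗ δ_i where λ_1 = ... = λ_s > λ_{s+1} ≥ ... ≥ λ_n > 0. Then D = Σ_{i=1}^s γ_i ⊗ δ_i is a positive semidefinite Hermitian matrix. -/
/-!
Realignment sends `γ ⊗ₖ δ` to the rank-one matrix `vecMulVec (vec γ) (vec δ)`, so it turns the
Hermitian Schmidt decomposition of `A` into a singular value decomposition
`R = G * diagonal λ * Hᵀ` of `R = realign A`, with orthonormal columns `G`, `H`. The map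
`B ↦ realign⁻¹ (realign B * Rᴴ * R)` is a compression of `B ⊗ₖ Aᵀ ⊗ₖ A`, hence preserves positive
semidefiniteness, and it multiplies the `i`-th Schmidt coefficient by `λᵢ²`. Iterating from `A`,
every `∑ λᵢ ^ (2p+1) • γᵢ ⊗ₖ δᵢ` is positive semidefinite. Dividing by `λ₁ ^ (2p+1)` and letting
`p → ∞` kills the terms with `λᵢ < λ₁`, and the positive semidefinite cone is closed.
-/

open Matrix Kronecker ComplexOrder

namespace Matrix

variable {R 𝕜 α β ι κ ν : Type*} [RCLike 𝕜]

def realign (A : Matrix (α × β) (α × β) R) : Matrix (α × α) (β × β) R :=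
  of fun x y => A (x.2, y.2) (x.1, y.1)

def vecCols (γ : ι → Matrix α α R) : Matrix (α × α) ι R :=
  of fun x i => vec (γ i) x

lemma realign_sum_smul_kronecker [Fintype ι] [DecidableEq ι] (c : ι → ℝ)
    (γ : ι → Matrix α α 𝕜) (δ : ι → Matrix β β 𝕜) :
    realign (∑ i, c i • (γ i ⊗ₖ δ i)) =
      vecCols γ * diagonal (fun i => (c i : 𝕜)) * (vecCols δ)ᵀ := by
  ext x y
  rw [mul_apply]
  simp only [realign, vecCols, of_apply, sum_apply, smul_apply, kroneckerMap_apply,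
    RCLike.real_smul_eq_coe_mul, mul_diagonal, transpose_apply, vec]
  exact Finset.sum_congr rfl fun i _ => by ring

lemma conjTranspose_vecCols_mul_self [CommSemiring R] [StarRing R] [Fintype α] [DecidableEq ι]
    (γ : ι → Matrix α α R)
    (h : ∀ i j, trace (γ i * (γ j)ᴴ) = if i = j then 1 else 0) :
    (vecCols γ)ᴴ * vecCols γ = 1 := by
  ext i j
  have := h j i
  rw [trace_mul_comm, ← star_vec_dotProduct_vec] at this
  simpa [vecCols, mul_apply, one_apply, dotProduct, eq_comm] using this

lemma mul_conjTranspose_mul_of_orthonormal [CommRing R] [StarRing R] [Fintype ι] [DecidableEq ι]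
    [Fintype κ] [Fintype ν] {G : Matrix κ ι R} {H : Matrix ν ι R} (hG : Gᴴ * G = 1)
    (hH : Hᴴ * H = 1) (a b : ι → R) :
    G * diagonal a * Hᵀ * (G * diagonal b * Hᵀ)ᴴ * (G * diagonal b * Hᵀ) =
      G * diagonal (a * star b * b) * Hᵀ := by
  have hH' : Hᵀ * Hᵀᴴ = 1 := by
    rw [conjTranspose_transpose_eq_transpose_conjTranspose, ← transpose_mul, hH, transpose_one]
  simp only [conjTranspose_mul, diagonal_conjTranspose, Matrix.mul_assoc]
  simp only [← Matrix.mul_assoc (Hᵀ), ← Matrix.mul_assoc Gᴴ, hH', hG, Matrix.one_mul,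
    ← Matrix.mul_assoc (diagonal _), diagonal_mul_diagonal, Pi.mul_def, mul_assoc]

lemma PosSemidef.contract [Fintype ι] [Fintype κ] {M : Matrix (ι × κ) (ι × κ) 𝕜}
    (hM : M.PosSemidef) : (of fun x y => ∑ a, ∑ b, M (x, a) (y, b)).PosSemidef := by
  classical
  convert hM.conjTranspose_mul_mul_same (of fun (p : ι × κ) x => (1 : Matrix ι ι 𝕜) p.1 x)
  ext x y
  simp only [mul_apply, of_apply, conjTranspose_apply, one_apply, Fintype.sum_prod_type]
  rw [Finset.sum_comm]
  simp [ite_mul, Finset.sum_ite_irrel]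

lemma PosSemidef.of_realign_eq [Fintype α] [Fintype β] {A B C : Matrix (α × β) (α × β) 𝕜}
    (hA : A.PosSemidef) (hB : B.PosSemidef)
    (hC : realign C = realign B * (realign A)ᴴ * realign A) : C.PosSemidef := by
  have hM := ((hB.kronecker (hA.transpose.kronecker hA)).submatrix
    fun p : (α × β) × (β × α) => ((p.1.1, p.2.1), ((p.2.2, p.2.1), (p.2.2, p.1.2)))).contract
  convert hM using 1
  ext ⟨a, b⟩ ⟨a', b'⟩
  -- `C (a, b) (a', b') = ∑ B (a, z') (a', z) * Aᵀ (w', z') (w, z) * A (w', b) (w, b')`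
  have hCab := congr_fun₂ hC (a', a) (b', b)
  simp only [realign, of_apply, mul_apply, conjTranspose_apply, Finset.sum_mul,
    hA.isHermitian.apply] at hCab
  rw [hCab]
  simp only [of_apply, submatrix_apply, kroneckerMap_apply, transpose_apply]
  rw [← Fintype.sum_prod_type', ← Fintype.sum_prod_type']
  let e : (α × α) × (β × β) ≃ (β × α) × (β × α) :=
    { toFun := fun ⟨⟨w, w'⟩, ⟨z, z'⟩⟩ => ((z', w'), (z, w))
      invFun := fun ⟨⟨z', w'⟩, ⟨z, w⟩⟩ => ((w, w'), (z, z'))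
      left_inv := fun _ => rfl
      right_inv := fun _ => rfl }
  exact Fintype.sum_equiv e _ _ fun _ => mul_assoc _ _ _

theorem PosSemidef.sum_odd_pow_smul_kronecker [Fintype α] [Fintype β] [Fintype ι] [DecidableEq ι]
    {A : Matrix (α × β) (α × β) 𝕜} (hA : A.PosSemidef) {lam : ι → ℝ}
    {γ : ι → Matrix α α 𝕜} {δ : ι → Matrix β β 𝕜}
    (hoγ : ∀ i j, trace (γ i * (γ j)ᴴ) = if i = j then 1 else 0)
    (hoδ : ∀ i j, trace (δ i * (δ j)ᴴ) = if i = j then 1 else 0)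
    (hdec : A = ∑ i, lam i • (γ i ⊗ₖ δ i)) (p : ℕ) :
    (∑ i, lam i ^ (2 * p + 1) • (γ i ⊗ₖ δ i)).PosSemidef := by
  induction p with
  | zero => simpa [← hdec] using hA
  | succ p ih =>
    refine hA.of_realign_eq ih ?_
    rw [hdec, realign_sum_smul_kronecker, realign_sum_smul_kronecker, realign_sum_smul_kronecker,
      mul_conjTranspose_mul_of_orthonormal (conjTranspose_vecCols_mul_self γ hoγ)
        (conjTranspose_vecCols_mul_self δ hoδ)]
    congr 3
    funext i
    simp only [Pi.mul_apply, Pi.star_apply, RCLike.star_def, RCLike.conj_ofReal]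
    push_cast
    ring

lemma isClosed_setOf_posSemidef [Fintype ν] : IsClosed {M : Matrix ν ν 𝕜 | M.PosSemidef} := by
  simp only [posSemidef_iff_dotProduct_mulVec, Set.ofPred_and, Set.ofPred_forall]
  refine (isClosed_eq continuous_id.matrix_conjTranspose continuous_id).inter
    (isClosed_iInter fun x => isClosed_le continuous_const ?_)
  exact continuous_const.dotProduct (continuous_id.matrix_mulVec continuous_const)

open Filter Topology in
theorem PosSemidef.sum_filter_eq_of_forall_pow [Fintype ι] [Fintype ν] {c : ι → ℝ} {μ : ℝ}
    (hμ : 0 < μ) (hc : ∀ i, 0 ≤ c i ∧ c i ≤ μ) {M : ι → Matrix ν ν 𝕜} {e : ℕ → ℕ}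
    (he : Tendsto e atTop atTop) (h : ∀ p, (∑ i, c i ^ e p • M i).PosSemidef) :
    (∑ i ∈ Finset.univ.filter (fun i => c i = μ), M i).PosSemidef := by
  have hlim (i : ι) :
      Tendsto (fun p => (c i / μ) ^ e p) atTop (𝓝 (if c i = μ then 1 else 0)) := by
    split_ifs with hi
    · simp [hi, hμ.ne']
    · exact (tendsto_pow_atTop_nhds_zero_of_lt_one (div_nonneg (hc i).1 hμ.le)
        ((div_lt_one hμ).2 ((hc i).2.lt_of_ne hi))).comp he
  have hsum : Tendsto (fun p => (μ ^ e p)⁻¹ • ∑ i, c i ^ e p • M i) atTop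
      (𝓝 (∑ i ∈ Finset.univ.filter (fun i => c i = μ), M i)) := by
    rw [Finset.sum_filter]
    convert tendsto_finsetSum Finset.univ fun i _ => (hlim i).smul_const (M i) using 2 with p
    · simp only [Finset.smul_sum, smul_smul, div_pow, inv_mul_eq_div]
    · exact Finset.sum_congr rfl fun i _ => by split_ifs <;> simp
  exact isClosed_setOf_posSemidef.mem_of_tendsto hsum
    (Eventually.of_forall fun p => (h p).smul (by positivity))

end Matrix

theorem stmt15_general {k m n : ℕ} (A : Matrix (Fin k × Fin m) (Fin k × Fin m) ℂ)
    (hA : A.PosSemidef) (s : ℕ) (hs1 : 1 ≤ s) (hsn : s ≤ n)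
    (lam : Fin n → ℝ) (γ : Fin n → Matrix (Fin k) (Fin k) ℂ)
    (δ : Fin n → Matrix (Fin m) (Fin m) ℂ)
    (hpos : ∀ i, 0 < lam i)
    (hconst : ∀ i j : Fin n, (i : ℕ) < s → (j : ℕ) < s → lam i = lam j)
    (hgap : ∀ i j : Fin n, (i : ℕ) < s → s ≤ (j : ℕ) → lam j < lam i)
    (hoγ : ∀ i j, Matrix.trace (γ i * (γ j)ᴴ) = if i = j then 1 else 0)
    (hoδ : ∀ i j, Matrix.trace (δ i * (δ j)ᴴ) = if i = j then 1 else 0)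
    (hdec : A = ∑ i, (lam i : ℂ) • (γ i ⊗ₖ δ i)) :
    (∑ i ∈ Finset.univ.filter (fun i : Fin n => (i : ℕ) < s), γ i ⊗ₖ δ i).PosSemidef := by
  let i₀ : Fin n := ⟨0, Nat.lt_of_lt_of_le hs1 hsn⟩
  have hi₀ : (i₀ : ℕ) < s := hs1
  have hle (i : Fin n) : lam i ≤ lam i₀ := by
    rcases lt_or_ge (i : ℕ) s with hi | hi
    · exact (hconst i i₀ hi hi₀).le
    · exact (hgap i₀ i hi₀ hi).le
  have htop : Finset.univ.filter (fun i : Fin n => (i : ℕ) < s) =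
      Finset.univ.filter (fun i => lam i = lam i₀) := by
    ext i
    simp only [Finset.mem_filter, Finset.mem_univ, true_and]
    refine ⟨fun hi => hconst i i₀ hi hi₀, fun h => ?_⟩
    by_contra hi
    exact (hgap i₀ i hi₀ (not_lt.1 hi)).ne h
  simp only [Complex.coe_smul] at hdec
  rw [htop]
  exact PosSemidef.sum_filter_eq_of_forall_pow (hpos i₀) (fun i => ⟨(hpos i).le, hle i⟩)
    (Filter.tendsto_atTop_mono (fun p => show p ≤ 2 * p + 1 by omega) Filter.tendsto_id)
    (hA.sum_odd_pow_smul_kronecker hoγ hoδ hdec)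

/-- The sum of the terms of maximal Schmidt coefficient of a PSD matrix is PSD. -/
theorem stmt15 {k m n : ℕ} (A : Matrix (Fin k × Fin m) (Fin k × Fin m) ℂ)
    (hA : A.PosSemidef) (s : ℕ) (hs1 : 1 ≤ s) (hsn : s ≤ n)
    (lam : Fin n → ℝ) (γ : Fin n → Matrix (Fin k) (Fin k) ℂ)
    (δ : Fin n → Matrix (Fin m) (Fin m) ℂ)
    (hpos : ∀ i, 0 < lam i)
    (hmono : ∀ i j : Fin n, i ≤ j → lam j ≤ lam i)
    (hconst : ∀ i j : Fin n, (i : ℕ) < s → (j : ℕ) < s → lam i = lam j)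
    (hgap : ∀ i j : Fin n, (i : ℕ) < s → s ≤ (j : ℕ) → lam j < lam i)
    (hγ : ∀ i, (γ i).IsHermitian) (hδ : ∀ i, (δ i).IsHermitian)
    (hoγ : ∀ i j, Matrix.trace (γ i * (γ j)ᴴ) = if i = j then 1 else 0)
    (hoδ : ∀ i j, Matrix.trace (δ i * (δ j)ᴴ) = if i = j then 1 else 0)
    (hdec : A = ∑ i, (lam i : ℂ) • (γ i ⊗ₖ δ i)) :
    (∑ i ∈ Finset.univ.filter (fun i : Fin n => (i : ℕ) < s), γ i ⊗ₖ δ i).PosSemidef :=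
  stmt15_general A hA s hs1 hsn lam γ δ hpos hconst hgap hoγ hoδ hdec
end

section
/- Let A ∈ M_k ⊗ M_m be a positive semidefinite Hermitian matrix of tensor rank 2, admitting a minimal Hermitian decomposition A = C_1 ⊗ D_1 + C_2 ⊗ D_2 with C_1, D_1 positive semidefinite, range(C_2) ⊆ range(C_1) and range(D_2) ⊆ range(D_1). Then A admits a separable decomposition A = α_1 ⊗ β_1 + α_2 ⊗ β_2 with all α_i ∈ M_k, β_i ∈ M_m positive semidefinite Hermitian. -/
/-!
Write `qᵢ(x) = x*Cᵢx`. Evaluating `A` on product vectors `x ⊗ y` shows `q₁(x)D₁ + q₂(x)D₂ ⪰ 0`,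
so `D₁ + rD₂ ⪰ 0` for every ratio `r = q₂(x)/q₁(x)`, and by closedness also for the supremum `b`
and the infimum `-a` of these ratios. The range condition gives `ker C₁ ⊆ ker C₂`, which makes
them bounded, and by construction `bC₁ - C₂ ⪰ 0` and `aC₁ + C₂ ⪰ 0`; linear independence of
`C₁, C₂` forces `a + b > 0`. Then
`A = (a + b)⁻¹ [(aC₁ + C₂) ⊗ (D₁ + bD₂) + (bC₁ - C₂) ⊗ (D₁ - aD₂)]`.
-/

open Matrix Kronecker ComplexOrder

theorem exists_le_mul_and_nonneg_add_mul {X Y : Type*} {f₁ f₂ : X → ℝ} {g₁ g₂ : Y → ℝ}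
    (hf₁ : ∀ x, 0 ≤ f₁ x) (hpos : ∃ x, 0 < f₁ x) (hbdd : ∃ t, ∀ x, f₂ x ≤ t * f₁ x)
    (h : ∀ x y, 0 ≤ f₁ x * g₁ y + f₂ x * g₂ y) :
    ∃ b, (∀ x, f₂ x ≤ b * f₁ x) ∧ ∀ y, 0 ≤ g₁ y + b * g₂ y := by
  set S := {r | ∃ x, 0 < f₁ x ∧ f₂ x / f₁ x = r}
  obtain ⟨x₀, hx₀⟩ := hpos
  obtain ⟨t, ht⟩ := hbdd
  have hne : S.Nonempty := ⟨_, x₀, hx₀, rfl⟩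
  have hS : BddAbove S := ⟨t, by
    rintro _ ⟨x, hx, rfl⟩
    exact (div_le_iff₀ hx).2 (ht x)⟩
  refine ⟨sSup S, fun x => ?_, fun y => ?_⟩
  · rcases (hf₁ x).eq_or_lt with hx | hx
    · simpa [← hx] using ht x
    · exact (div_le_iff₀ hx).1 (le_csSup hS ⟨x, hx, rfl⟩)
  · -- the ratios `f₂ x / f₁ x` lie in the closed set below, hence so does their supremum
    have hsub : S ⊆ {r | 0 ≤ g₁ y + r * g₂ y} := by
      rintro _ ⟨x, hx, rfl⟩
      have hdiv : g₁ y + f₂ x / f₁ x * g₂ y = (f₁ x * g₁ y + f₂ x * g₂ y) / f₁ x := by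
        field_simp
      rw [Set.mem_ofPred_eq, hdiv]
      exact div_nonneg (h x y) hx.le
    have hclosed : IsClosed {r | 0 ≤ g₁ y + r * g₂ y} :=
      isClosed_le continuous_const (by fun_prop)
    exact closure_minimal hsub hclosed (csSup_mem_closure hne hS)

namespace Matrix

variable {n : Type*}

lemma IsHermitian.ofReal_smul {M : Matrix n n ℂ} (hM : M.IsHermitian) (r : ℝ) :
    ((r : ℂ) • M).IsHermitian :=
  hM.smul (by simp [IsSelfAdjoint])

variable [Fintype n]

def quadForm (M : Matrix n n ℂ) (x : n → ℂ) : ℝ := (star x ⬝ᵥ M *ᵥ x).re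

@[simp] lemma quadForm_add (M N : Matrix n n ℂ) (x : n → ℂ) :
    quadForm (M + N) x = quadForm M x + quadForm N x := by
  simp [quadForm, add_mulVec]

@[simp] lemma quadForm_sub (M N : Matrix n n ℂ) (x : n → ℂ) :
    quadForm (M - N) x = quadForm M x - quadForm N x := by
  simp [quadForm, sub_mulVec]

@[simp] lemma quadForm_ofReal_smul (r : ℝ) (M : Matrix n n ℂ) (x : n → ℂ) :
    quadForm ((r : ℂ) • M) x = r * quadForm M x := by
  simp [quadForm, smul_mulVec]

lemma IsHermitian.coe_quadForm {M : Matrix n n ℂ} (hM : M.IsHermitian) (x : n → ℂ) :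
    (quadForm M x : ℂ) = star x ⬝ᵥ M *ᵥ x :=
  Complex.ext rfl (hM.im_star_dotProduct_mulVec_self x).symm

lemma PosSemidef.quadForm_nonneg {M : Matrix n n ℂ} (hM : M.PosSemidef) (x : n → ℂ) :
    0 ≤ quadForm M x :=
  hM.re_dotProduct_nonneg x

lemma IsHermitian.posSemidef_iff_quadForm_nonneg {M : Matrix n n ℂ} (hM : M.IsHermitian) :
    M.PosSemidef ↔ ∀ x, 0 ≤ quadForm M x :=
  ⟨PosSemidef.quadForm_nonneg, fun h => .of_dotProduct_mulVec_nonneg hM fun x => by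
    rw [← hM.coe_quadForm]; exact_mod_cast h x⟩

lemma IsHermitian.eq_of_quadForm_eq {M N : Matrix n n ℂ} (hM : M.IsHermitian)
    (hN : N.IsHermitian) (h : ∀ x, quadForm M x = quadForm N x) : M = N := by
  open scoped MatrixOrder in
  refine le_antisymm ?_ ?_
  · rw [le_iff, (hN.sub hM).posSemidef_iff_quadForm_nonneg]
    simp [h]
  · rw [le_iff, (hM.sub hN).posSemidef_iff_quadForm_nonneg]
    simp [h]

lemma quadForm_kronecker {m : Type*} [Fintype m] {C : Matrix n n ℂ} {D : Matrix m m ℂ}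
    (hC : C.IsHermitian) (hD : D.IsHermitian) (x : n → ℂ) (y : m → ℂ) :
    quadForm (C ⊗ₖ D) (fun p => x p.1 * y p.2) = quadForm C x * quadForm D y := by
  have key : star (fun p : n × m => x p.1 * y p.2) ⬝ᵥ (C ⊗ₖ D) *ᵥ (fun p => x p.1 * y p.2)
      = (star x ⬝ᵥ C *ᵥ x) * (star y ⬝ᵥ D *ᵥ y) := by
    simp only [dotProduct, mulVec, Fintype.sum_prod_type, Finset.sum_mul_sum,
      kroneckerMap_apply, Pi.star_apply, star_mul']
    refine Finset.sum_congr rfl fun i _ => ?_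
    refine Finset.sum_congr rfl fun j _ => ?_
    simp only [Finset.sum_mul, Finset.mul_sum]
    rw [Finset.sum_comm]
    refine Finset.sum_congr rfl fun l _ => Finset.sum_congr rfl fun k _ => ?_
    ring
  rw [quadForm, key, ← hC.coe_quadForm, ← hD.coe_quadForm, ← Complex.ofReal_mul,
    Complex.ofReal_re]

lemma quadForm_le_sum_norm_mul (M : Matrix n n ℂ) (x : n → ℂ) :
    quadForm M x ≤ ∑ i, ∑ j, ‖M i j‖ * (‖x i‖ * ‖x j‖) :=
  calc quadForm M x ≤ ‖star x ⬝ᵥ M *ᵥ x‖ := Complex.re_le_norm _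
    _ ≤ ∑ i, ∑ j, ‖star (x i) * (M i j * x j)‖ := by
      refine (norm_sum_le _ _).trans (Finset.sum_le_sum fun i _ => ?_)
      simp only [Pi.star_apply, mulVec, dotProduct, Finset.mul_sum]
      exact norm_sum_le _ _
    _ = ∑ i, ∑ j, ‖M i j‖ * (‖x i‖ * ‖x j‖) := by
      refine Finset.sum_congr rfl fun i _ => Finset.sum_congr rfl fun j _ => ?_
      rw [norm_mul, norm_mul, norm_star]
      ring

lemma quadForm_diagonal [DecidableEq n] (d : n → ℝ) (x : n → ℂ) :
    quadForm (diagonal fun i => (d i : ℂ)) x = ∑ i, d i * ‖x i‖ ^ 2 := by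
  simp only [quadForm, dotProduct, mulVec_diagonal, Complex.re_sum]
  refine Finset.sum_congr rfl fun i _ => ?_
  rw [Pi.star_apply, mul_left_comm, RCLike.star_def, RCLike.conj_mul]
  exact_mod_cast Complex.re_ofReal_mul (d i) _

lemma quadForm_mul_mul_conjTranspose {m : Type*} [Fintype m] (U : Matrix n m ℂ)
    (N : Matrix m m ℂ) (x : n → ℂ) :
    quadForm (U * N * Uᴴ) x = quadForm N (Uᴴ *ᵥ x) := by
  simp only [quadForm, ← mulVec_mulVec, dotProduct_mulVec, star_mulVec,
    conjTranspose_conjTranspose]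

lemma exists_quadForm_le_mul_sum_of_apply_eq_zero {d : n → ℝ} (hd : ∀ i, 0 ≤ d i)
    {M : Matrix n n ℂ} (hM : ∀ i j, d i = 0 ∨ d j = 0 → M i j = 0) :
    ∃ t, ∀ x, quadForm M x ≤ t * ∑ i, d i * ‖x i‖ ^ 2 := by
  -- with `S = ∑ dᵢ‖xᵢ‖²`, each `√dᵢ‖xᵢ‖ ≤ √S`, so `‖xᵢ‖‖xⱼ‖ ≤ S / √(dᵢdⱼ)` when `dᵢ, dⱼ > 0`
  refine ⟨∑ i, ∑ j, ‖M i j‖ / (√(d i) * √(d j)), fun x => ?_⟩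
  set S := ∑ i, d i * ‖x i‖ ^ 2
  refine (quadForm_le_sum_norm_mul M x).trans ?_
  rw [Finset.sum_mul]
  refine Finset.sum_le_sum fun i _ => ?_
  rw [Finset.sum_mul]
  refine Finset.sum_le_sum fun j _ => ?_
  by_cases h0 : d i = 0 ∨ d j = 0
  · simp [hM i j h0]
  rw [not_or] at h0
  have hpos : 0 < √(d i) * √(d j) := by
    have := (hd i).lt_of_ne' h0.1
    have := (hd j).lt_of_ne' h0.2
    positivity
  have hsq : ∀ k, (√(d k) * ‖x k‖) ^ 2 ≤ S := fun k => by
    rw [mul_pow, Real.sq_sqrt (hd k)]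
    exact Finset.single_le_sum (f := fun k => d k * ‖x k‖ ^ 2)
      (fun k _ => mul_nonneg (hd k) (sq_nonneg _)) (Finset.mem_univ k)
  calc ‖M i j‖ * (‖x i‖ * ‖x j‖)
      = ‖M i j‖ / (√(d i) * √(d j)) * ((√(d i) * ‖x i‖) * (√(d j) * ‖x j‖)) := by
        rw [div_mul_eq_mul_div, eq_div_iff hpos.ne']
        ring
    _ ≤ ‖M i j‖ / (√(d i) * √(d j)) * S := by
        gcongr
        nlinarith [hsq i, hsq j, two_mul_le_add_sq (√(d i) * ‖x i‖) (√(d j) * ‖x j‖)]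

lemma exists_quadForm_le_mul_quadForm [DecidableEq n] {C₁ C₂ : Matrix n n ℂ}
    (hC₁ : C₁.PosSemidef) (hC₂ : C₂.IsHermitian) (hker : ∀ x, C₁ *ᵥ x = 0 → C₂ *ᵥ x = 0) :
    ∃ t, ∀ x, quadForm C₂ x ≤ t * quadForm C₁ x := by
  -- in an eigenbasis of `C₁`, `C₂` vanishes on the rows and columns of the zero eigenvalues
  set U : Matrix n n ℂ := (hC₁.1.eigenvectorUnitary : Matrix n n ℂ)
  set d := hC₁.1.eigenvalues
  have hUU : U * Uᴴ = 1 := Unitary.coe_mul_star_self _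
  have hC₁U : C₁ = U * diagonal (fun i => (d i : ℂ)) * Uᴴ := hC₁.1.spectral_theorem
  set M := Uᴴ * C₂ * U
  have hC₂U : C₂ = U * M * Uᴴ := by
    simp only [M, ← mul_assoc, hUU, one_mul]
    rw [mul_assoc, hUU, mul_one]
  have hcol : ∀ i j, d j = 0 → M i j = 0 := fun i j hj => by
    have hCU : C₁ *ᵥ (U *ᵥ Pi.single j 1) = 0 := by
      rw [hC₁.1.eigenvectorUnitary_mulVec, hC₁.1.mulVec_eigenvectorBasis]
      simp [d, hj]
    have hMe : M *ᵥ Pi.single j 1 = 0 := by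
      simp only [M, ← mulVec_mulVec, hker _ hCU, mulVec_zero]
    simpa [mulVec_single_one] using congrFun hMe i
  have hMH : M.IsHermitian := isHermitian_conjTranspose_mul_mul U hC₂
  have hM : ∀ i j, d i = 0 ∨ d j = 0 → M i j = 0 := by
    rintro i j (hi | hj)
    · rw [← hMH.apply i j, hcol j i hi, star_zero]
    · exact hcol i j hj
  obtain ⟨t, ht⟩ := exists_quadForm_le_mul_sum_of_apply_eq_zero hC₁.eigenvalues_nonneg hM
  refine ⟨t, fun x => ?_⟩
  rw [hC₂U, hC₁U, quadForm_mul_mul_conjTranspose, quadForm_mul_mul_conjTranspose,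
    quadForm_diagonal]
  exact ht _

lemma mulVec_eq_zero_of_range_le {C₁ C₂ : Matrix n n ℂ} (hC₁ : C₁.IsHermitian)
    (hC₂ : C₂.IsHermitian) (hr : ∀ y, (∃ z, C₂ *ᵥ z = y) → ∃ z, C₁ *ᵥ z = y) {x : n → ℂ}
    (hx : C₁ *ᵥ x = 0) : C₂ *ᵥ x = 0 := by
  -- `‖C₂x‖² = x*C₂(C₂x) = x*C₁z = (C₁x)*z = 0`
  obtain ⟨z, hz⟩ := hr (C₂ *ᵥ (C₂ *ᵥ x)) ⟨_, rfl⟩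
  have hxC : ∀ {C : Matrix n n ℂ}, C.IsHermitian → star (C *ᵥ x) = star x ᵥ* C := fun hC => by
    rw [star_mulVec, hC.eq]
  rw [← dotProduct_star_self_eq_zero, hxC hC₂, ← dotProduct_mulVec, ← hz, dotProduct_mulVec,
    ← hxC hC₁, hx, star_zero, zero_dotProduct]

lemma PosSemidef.exists_quadForm_pos {C : Matrix n n ℂ} (hC : C.PosSemidef) (h : C ≠ 0) :
    ∃ x, 0 < quadForm C x := by
  by_contra! hle
  exact h <| hC.1.eq_of_quadForm_eq isHermitian_zero fun x =>
    (hle x).antisymm (hC.quadForm_nonneg x) |>.trans (by simp [quadForm])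

lemma exists_posSemidef_smul_sub_and_add_smul {m : Type*} [Fintype m] [DecidableEq n]
    {A : Matrix (n × m) (n × m) ℂ} {C₁ C₂ : Matrix n n ℂ} {D₁ D₂ : Matrix m m ℂ}
    (hA : A.PosSemidef) (hdec : A = C₁ ⊗ₖ D₁ + C₂ ⊗ₖ D₂) (hC₁ : C₁.PosSemidef) (hC₁0 : C₁ ≠ 0)
    (hC₂ : C₂.IsHermitian) (hD₁ : D₁.IsHermitian) (hD₂ : D₂.IsHermitian)
    (hker : ∀ x, C₁ *ᵥ x = 0 → C₂ *ᵥ x = 0) :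
    ∃ b : ℝ, ((b : ℂ) • C₁ - C₂).PosSemidef ∧ (D₁ + (b : ℂ) • D₂).PosSemidef := by
  have hprod : ∀ x y, 0 ≤ quadForm C₁ x * quadForm D₁ y + quadForm C₂ x * quadForm D₂ y :=
    fun x y => by
      rw [← quadForm_kronecker hC₁.1 hD₁, ← quadForm_kronecker hC₂ hD₂, ← quadForm_add, ← hdec]
      exact hA.quadForm_nonneg _
  obtain ⟨b, hCb, hDb⟩ := exists_le_mul_and_nonneg_add_mul hC₁.quadForm_nonneg
    (hC₁.exists_quadForm_pos hC₁0) (exists_quadForm_le_mul_quadForm hC₁ hC₂ hker) hprod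
  refine ⟨b, ?_, ?_⟩
  · rw [((hC₁.1.ofReal_smul b).sub hC₂).posSemidef_iff_quadForm_nonneg]
    simpa only [quadForm_sub, quadForm_ofReal_smul, sub_nonneg] using hCb
  · rw [(hD₁.add (hD₂.ofReal_smul b)).posSemidef_iff_quadForm_nonneg]
    simpa only [quadForm_add, quadForm_ofReal_smul] using hDb

lemma add_pos_of_posSemidef_of_linearIndependent {C₁ C₂ : Matrix n n ℂ} {a b : ℝ}
    (hC₁ : C₁.PosSemidef) (hli : LinearIndependent ℂ ![C₁, C₂]) (hP : ((b : ℂ) • C₁ - C₂).PosSemidef)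
    (hQ : ((a : ℂ) • C₁ + C₂).PosSemidef) : 0 < a + b := by
  open scoped MatrixOrder in
  have hsum : ((b : ℂ) • C₁ - C₂) + ((a : ℂ) • C₁ + C₂) = ((a + b : ℝ) : ℂ) • C₁ := by
    push_cast
    module
  refine lt_of_le_of_ne ?_ fun h => ?_
  · obtain ⟨x, hx⟩ := hC₁.exists_quadForm_pos (by simpa using hli.ne_zero 0)
    have := (hP.add hQ).quadForm_nonneg x
    rw [hsum, quadForm_ofReal_smul] at this
    exact nonneg_of_mul_nonneg_left this hx
  · rw [← h, Complex.ofReal_zero, zero_smul] at hsum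
    have hP0 := ((add_eq_zero_iff_of_nonneg hP.nonneg hQ.nonneg).1 hsum).1
    have := LinearIndependent.pair_iff.1 hli b (-1) (by rw [← hP0]; module)
    norm_num at this

end Matrix

lemma kronecker_add_kronecker_eq_of_add_ne_zero {l m p q K : Type*} [Field K] {a b : K}
    (h : a + b ≠ 0) (C₁ C₂ : Matrix l m K) (D₁ D₂ : Matrix p q K) :
    C₁ ⊗ₖ D₁ + C₂ ⊗ₖ D₂ = ((a + b)⁻¹ • (a • C₁ + C₂)) ⊗ₖ (D₁ + b • D₂)
      + ((a + b)⁻¹ • (b • C₁ - C₂)) ⊗ₖ (D₁ - a • D₂) := by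
  ext
  simp only [Matrix.add_apply, Matrix.sub_apply, Matrix.smul_apply, kroneckerMap_apply,
    smul_eq_mul]
  field_simp
  ring

theorem stmt17_general {k m : ℕ} (A : Matrix (Fin k × Fin m) (Fin k × Fin m) ℂ)
    (hA : A.PosSemidef)
    (C₁ C₂ : Matrix (Fin k) (Fin k) ℂ) (D₁ D₂ : Matrix (Fin m) (Fin m) ℂ)
    (hC₂ : C₂.IsHermitian) (hD₂ : D₂.IsHermitian)
    (hC₁ : C₁.PosSemidef) (hD₁ : D₁.PosSemidef)
    (hliC : LinearIndependent ℂ ![C₁, C₂])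
    (hdec : A = C₁ ⊗ₖ D₁ + C₂ ⊗ₖ D₂)
    (hrC : ∀ x : Fin k → ℂ, (∃ z, C₂ *ᵥ z = x) → ∃ z, C₁ *ᵥ z = x) :
    ∃ (α₁ α₂ : Matrix (Fin k) (Fin k) ℂ) (β₁ β₂ : Matrix (Fin m) (Fin m) ℂ),
      α₁.PosSemidef ∧ α₂.PosSemidef ∧ β₁.PosSemidef ∧ β₂.PosSemidef ∧
      A = α₁ ⊗ₖ β₁ + α₂ ⊗ₖ β₂ := by
  have hC₁0 : C₁ ≠ 0 := by simpa using hliC.ne_zero 0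
  have hker : ∀ x, C₁ *ᵥ x = 0 → C₂ *ᵥ x = 0 :=
    fun _ => mulVec_eq_zero_of_range_le hC₁.1 hC₂ hrC
  obtain ⟨b, hP, hDb⟩ :=
    exists_posSemidef_smul_sub_and_add_smul hA hdec hC₁ hC₁0 hC₂ hD₁.1 hD₂ hker
  obtain ⟨a, hQ, hDa⟩ := exists_posSemidef_smul_sub_and_add_smul hA (by ext; simp [hdec]) hC₁ hC₁0
    hC₂.neg hD₁.1 hD₂.neg (by simpa [neg_mulVec] using hker)
  rw [sub_neg_eq_add] at hQ
  rw [smul_neg, ← sub_eq_add_neg] at hDa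
  have hs := add_pos_of_posSemidef_of_linearIndependent hC₁ hliC hP hQ
  have hs' : (0 : ℂ) ≤ ((a : ℂ) + b)⁻¹ := by exact_mod_cast inv_nonneg.2 hs.le
  refine ⟨_, _, _, _, hQ.smul hs', hP.smul hs', hDb, hDa, ?_⟩
  rw [hdec]
  exact kronecker_add_kronecker_eq_of_add_ne_zero (by exact_mod_cast hs.ne') _ _ _ _

/-- A PSD matrix of tensor rank 2 with a minimal Hermitian decomposition
`C₁ ⊗ D₁ + C₂ ⊗ D₂` where `C₁, D₁` are PSD, `range C₂ ⊆ range C₁` and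
`range D₂ ⊆ range D₁`, admits a separable decomposition. -/
theorem stmt17 {k m : ℕ} (A : Matrix (Fin k × Fin m) (Fin k × Fin m) ℂ)
    (hA : A.PosSemidef)
    (C₁ C₂ : Matrix (Fin k) (Fin k) ℂ) (D₁ D₂ : Matrix (Fin m) (Fin m) ℂ)
    (hC₂ : C₂.IsHermitian) (hD₂ : D₂.IsHermitian)
    (hC₁ : C₁.PosSemidef) (hD₁ : D₁.PosSemidef)
    (hliC : LinearIndependent ℂ ![C₁, C₂])
    (hliD : LinearIndependent ℂ ![D₁, D₂])
    (hdec : A = C₁ ⊗ₖ D₁ + C₂ ⊗ₖ D₂)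
    (hrC : ∀ x : Fin k → ℂ, (∃ z, C₂ *ᵥ z = x) → ∃ z, C₁ *ᵥ z = x)
    (hrD : ∀ y : Fin m → ℂ, (∃ z, D₂ *ᵥ z = y) → ∃ z, D₁ *ᵥ z = y) :
    ∃ (α₁ α₂ : Matrix (Fin k) (Fin k) ℂ) (β₁ β₂ : Matrix (Fin m) (Fin m) ℂ),
      α₁.PosSemidef ∧ α₂.PosSemidef ∧ β₁.PosSemidef ∧ β₂.PosSemidef ∧
      A = α₁ ⊗ₖ β₁ + α₂ ⊗ₖ β₂ :=
  stmt17_general A hA C₁ C₂ D₁ D₂ hC₂ hD₂ hC₁ hD₁ hliC hdec hrC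
end
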